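/- arXiv:2211.02518 — 4 statements merged into one kernel-verified Lean document; each statement's English description precedes it below -/
import Mathlib

section
/- Let α ∈ R and ℓ ∈ ℕ₀. If f ∈ C^{ℓ+1}(ℝ^N) and each first-order partial derivative ∂_j f (1 ≤ j ≤ N) is bounded, then the divided difference f^{α}(x) := (f(x) − f(σ_α(x)))/⟨α,x⟩ (defined for ⟨α,x⟩ ≠ 0) extends to a function of class C^ℓ on all of ℝ^N, and there is a constant C > 0 independent of f, ℓ and α such that sup_{x∈ℝ^N} |f^{α}(x)| ≤ C · Σ_{j=1}^N sup_{x∈ℝ^N} |∂_j f(x)|. -/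
open MeasureTheory Metric Complex
open scoped BigOperators ENNReal RealInnerProductSpace

noncomputable section

/-- `ℝ^N` with the Euclidean inner product. -/
abbrev V (N : ℕ) := EuclideanSpace ℝ (Fin N)

variable {N : ℕ}

/-- The reflection `σ_α(x) = x − (2⟨x,α⟩/‖α‖²) α`. -/
def sigma' (α x : V N) : V N := x - (2 * ⟪x, α⟫ / ‖α‖ ^ 2) • α

/-- `R` is a normalized root system: `0 ∉ R`, `‖α‖² = 2`, `σ_α(R) = R`,
and `R ∩ ℝα = {±α}` for every `α ∈ R`. -/
structure IsNRS {N : ℕ} (R : Finset (V N)) : Prop where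
  ne_zero : (0 : V N) ∉ R
  normSq : ∀ α ∈ R, ‖α‖ ^ 2 = 2
  reflMem : ∀ α ∈ R, ∀ β ∈ R, sigma' α β ∈ R
  two : ∀ α ∈ R, ∀ β ∈ R, (∃ c : ℝ, β = c • α) → β = α ∨ β = -α

/-- The density `w(x) = ∏_{α ∈ R} |⟨x,α⟩|^{k(α)}`. -/
def wfun (R : Finset (V N)) (k : V N → ℝ) (x : V N) : ℝ := ∏ α ∈ R, |⟪x, α⟫| ^ (k α)

/-- The measure `dw = w(x) dx`. -/
def dw (R : Finset (V N)) (k : V N → ℝ) : Measure (V N) :=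
  volume.withDensity fun x => ENNReal.ofReal (wfun R k x)

/-- `w(B(x,r))`, the `dw`-measure of the closed ball. -/
def wB (R : Finset (V N)) (k : V N → ℝ) (x : V N) (r : ℝ) : ℝ := (dw R k (closedBall x r)).toReal

/-- The Mehta–Macdonald constant `c_k = ∫ e^{−‖x‖²/2} dw(x)`. -/
def ck (R : Finset (V N)) (k : V N → ℝ) : ℝ := ∫ x, Real.exp (-‖x‖ ^ 2 / 2) ∂(dw R k)

/-- The homogeneous dimension `𝐍 = N + Σ_{α∈R} k(α)`. -/
def NN (R : Finset (V N)) (k : V N → ℝ) : ℝ := N + ∑ α ∈ R, k α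

/-- The reflection group `G` generated by the `σ_α`, `α ∈ R`
(realized as the set of all finite products of such reflections). -/
def Gset (R : Finset (V N)) : Set (V N → V N) :=
  {g | ∃ l : List (V N), (∀ α ∈ l, α ∈ R) ∧ g = l.foldr (fun α h => sigma' α ∘ h) id}

/-- The distance of orbits, `d(x,y) = min_{σ ∈ G} ‖x − σ(y)‖`. -/
def dG (R : Finset (V N)) (x y : V N) : ℝ := sInf {r | ∃ g ∈ Gset R, r = ‖x - g y‖}

/-- The partial derivative `∂_j`. -/
def pd (j : Fin N) (f : V N → ℂ) : V N → ℂ := fun x => fderiv ℝ f x (EuclideanSpace.single j 1)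

/-- The multi-index partial derivative `∂^β = ∂_1^{β_1} ∘ ⋯ ∘ ∂_N^{β_N}`. -/
def pdM (β : Fin N → ℕ) (f : V N → ℂ) : V N → ℂ :=
  (Finset.univ : Finset (Fin N)).toList.foldr (fun j g => (pd j)^[β j] g) f

/-- The Dunkl operator `T_j`. -/
def TDop (R : Finset (V N)) (k : V N → ℝ) (j : Fin N) (f : V N → ℂ) : V N → ℂ := fun x =>
  pd j f x + ∑ α ∈ R, (((k α / 2) * α j : ℝ) : ℂ) * ((f x - f (sigma' α x)) / ((⟪α, x⟫ : ℝ) : ℂ))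

/-- The iterated Dunkl operator `T^β = T_1^{β_1} ∘ ⋯ ∘ T_N^{β_N}`. -/
def TDopM (R : Finset (V N)) (k : V N → ℝ) (β : Fin N → ℕ) (f : V N → ℂ) : V N → ℂ :=
  (Finset.univ : Finset (Fin N)).toList.foldr (fun j g => (TDop R k j)^[β j] g) f

/-- The Dunkl transform `𝓕f(ξ) = c_k^{-1} ∫ f(x) conj(𝐄(ξ,x)) dw(x)`,
for a given Dunkl kernel `Ek (ξ,x) ↦ E(iξ,x)`. -/
def dunklF (R : Finset (V N)) (k : V N → ℝ) (Ek : V N → V N → ℂ) (f : V N → ℂ) (ξ : V N) : ℂ :=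
  ((ck R k : ℝ) : ℂ)⁻¹ * ∫ x, f x * (starRingEnd ℂ) (Ek ξ x) ∂(dw R k)

/-- The Dunkl translation `f(x,y) = τ_x f(−y) = c_k^{-1} ∫ 𝐄(ξ,x) conj(𝐄(ξ,y)) 𝓕f(ξ) dw(ξ)`. -/
def dtrans (R : Finset (V N)) (k : V N → ℝ) (Ek : V N → V N → ℂ) (f : V N → ℂ) (x y : V N) : ℂ :=
  ((ck R k : ℝ) : ℂ)⁻¹ * ∫ ξ, Ek ξ x * (starRingEnd ℂ) (Ek ξ y) * dunklF R k Ek f ξ ∂(dw R k)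

/-- The generalized heat kernel `h_t(x,y) = c_k^{-1} ∫ e^{−t‖ξ‖²} 𝐄(ξ,x) conj(𝐄(ξ,y)) dw(ξ)`. -/
def heat (R : Finset (V N)) (k : V N → ℝ) (Ek : V N → V N → ℂ) (t : ℝ) (x y : V N) : ℂ :=
  ((ck R k : ℝ) : ℂ)⁻¹ *
    ∫ ξ, ((Real.exp (-t * ‖ξ‖ ^ 2) : ℝ) : ℂ) * Ek ξ x * (starRingEnd ℂ) (Ek ξ y) ∂(dw R k)

/-- `𝓕^{-1}f(x,y) := c_k^{-1} ∫ f(ξ) 𝐄(ξ,x) conj(𝐄(ξ,y)) dw(ξ)`. -/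
def Finv (R : Finset (V N)) (k : V N → ℝ) (Ek : V N → V N → ℂ) (f : V N → ℂ) (x y : V N) : ℂ :=
  ((ck R k : ℝ) : ℂ)⁻¹ * ∫ ξ, f ξ * Ek ξ x * (starRingEnd ℂ) (Ek ξ y) ∂(dw R k)

/-- For a finite sequence `𝛂 = (α₁,…,α_m)`, the composition `σ_𝛂 = σ_{α_m}∘⋯∘σ_{α₁}`. -/
def sigmaL (l : List (V N)) (y : V N) : V N := l.foldl (fun z α => sigma' α z) y

/-- `ρ_𝛂(x,y,t) = ∏_{i=0}^{m−1} (1 + ‖x − σ_{α_i}∘⋯∘σ_{α₁}(y)‖/√t)^{−2}`. -/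
def rho : List (V N) → V N → V N → ℝ → ℝ
  | [], _, _, _ => 1
  | α :: l, x, y, t => ((1 + ‖x - y‖ / Real.sqrt t) ^ 2)⁻¹ * rho l x (sigma' α y) t

/-- `𝛂` is admissible for `(x,y)`: `d(x, σ_𝛂(y)) = ‖x − σ_𝛂(y)‖`. -/
def IsAdmissible (R : Finset (V N)) (l : List (V N)) (x y : V N) : Prop :=
  dG R x (sigmaL l y) = ‖x - sigmaL l y‖

/-- `Λ(x,y,t) = Σ_{𝛂 ∈ 𝒜(x,y), ℓ(𝛂) ≤ |G|} ρ_𝛂(x,y,t)`. -/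
def Lam (R : Finset (V N)) (x y : V N) (t : ℝ) : ℝ :=
  ∑' l : {l : List (V N) // (∀ a ∈ l, a ∈ R) ∧ l.length ≤ Nat.card (Gset R) ∧
      IsAdmissible R l x y},
    rho (l : List (V N)) x y t

theorem my_param_contDiff (n : ℕ) {G : Type} [NormedAddCommGroup G] [NormedSpace ℝ G]
    [CompleteSpace G] (F : V N × ℝ → G) (hF : ContDiff ℝ n F) :
    ContDiff ℝ n (fun x : V N => ∫ t in (0:ℝ)..1, F (x, t)) := by
  induction n generalizing G with
  | zero =>
      rw [show ((0:ℕ) : WithTop ℕ∞) = 0 from rfl, contDiff_zero] at hF ⊢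
      exact intervalIntegral.continuous_parametric_intervalIntegral_of_continuous'
        (f := fun x t => F (x, t)) (by exact hF) 0 1
  | succ n ih =>
      set F' : V N × ℝ → (V N →L[ℝ] G) :=
        fun p => (fderiv ℝ F p).comp (ContinuousLinearMap.inl ℝ (V N) ℝ) with hF'def
      have hdF : ContDiff ℝ n (fderiv ℝ F) :=
        hF.fderiv_right (by exact_mod_cast le_rfl)
      have hF' : ContDiff ℝ n F' := hdF.clm_comp contDiff_const
      have hFd : Differentiable ℝ F := hF.differentiable (by exact_mod_cast Nat.succ_ne_zero n)
      have hder : ∀ x₀ : V N, HasFDerivAt (fun x : V N => ∫ t in (0:ℝ)..1, F (x, t))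
          (∫ t in (0:ℝ)..1, F' (x₀, t)) x₀ := by
        intro x₀
        have hcpt : IsCompact (Metric.closedBall x₀ 1 ×ˢ Set.uIcc (0:ℝ) 1) :=
          (isCompact_closedBall _ _).prod isCompact_uIcc
        haveI : SecondCountableTopologyEither ℝ (V N →L[ℝ] G) :=
          secondCountableTopologyEither_of_left ℝ _
        obtain ⟨M, hM⟩ : ∃ M, ∀ p ∈ Metric.closedBall x₀ 1 ×ˢ Set.uIcc (0:ℝ) 1, ‖F' p‖ ≤ M := by
          rcases hcpt.exists_bound_of_continuousOn hF'.continuous.continuousOn with ⟨M, hM⟩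
          exact ⟨M, hM⟩
        apply intervalIntegral.hasFDerivAt_integral_of_dominated_of_fderiv_le
          (F' := fun x t => F' (x, t)) (bound := fun _ => M) (s := Metric.ball x₀ 1) (Metric.ball_mem_nhds x₀ one_pos)
        · exact Filter.Eventually.of_forall fun x =>
            (hF.continuous.comp (Continuous.prodMk_right x)).aestronglyMeasurable
        · exact (hF.continuous.comp (Continuous.prodMk_right x₀)).intervalIntegrable 0 1
        · exact (hF'.continuous.comp (Continuous.prodMk_right x₀)).aestronglyMeasurable
        · refine Filter.Eventually.of_forall fun t ht x hx => hM (x, t) ?_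
          exact ⟨ball_subset_closedBall hx, Set.uIoc_subset_uIcc ht⟩
        · exact intervalIntegrable_const
        · refine Filter.Eventually.of_forall fun t ht x hx => ?_
          have h1 : HasFDerivAt F (fderiv ℝ F (x, t)) (x, t) := (hFd (x, t)).hasFDerivAt
          have h2 : HasFDerivAt (fun y : V N => (y, t))
              (ContinuousLinearMap.inl ℝ (V N) ℝ) x := hasFDerivAt_prodMk_left x t
          exact h1.comp x h2
      rw [show ((n + 1 : ℕ) : WithTop ℕ∞) = (n : WithTop ℕ∞) + 1 from by norm_cast,
        contDiff_succ_iff_fderiv]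
      refine ⟨fun x => (hder x).differentiableAt, by simp, ?_⟩
      have : (fderiv ℝ fun x : V N => ∫ t in (0:ℝ)..1, F (x, t)) =
          fun x => ∫ t in (0:ℝ)..1, F' (x, t) := funext fun x => (hder x).fderiv
      rw [this]
      exact ih _ hF'

theorem my_single_sum (α : V N) : α = ∑ j, α j • EuclideanSpace.single j (1:ℝ) := by
  have h := (EuclideanSpace.basisFun (Fin N) ℝ).sum_repr α
  simp only [EuclideanSpace.basisFun_repr, EuclideanSpace.basisFun_apply] at h
  exact h.symm

theorem statement0_proof (N : ℕ) (R : Finset (V N)) (hR : IsNRS R) :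
    ∃ C > (0 : ℝ), ∀ (ℓ : ℕ) (f : V N → ℂ), ContDiff ℝ (ℓ + 1 : ℕ) f →
      (∀ j : Fin N, ∃ M : ℝ, ∀ x : V N, ‖pd j f x‖ ≤ M) →
      ∀ α ∈ R, ∃ g : V N → ℂ, ContDiff ℝ (ℓ : ℕ) g ∧
        (∀ x : V N, ⟪α, x⟫ ≠ 0 →
          g x = (f x - f (sigma' α x)) / ((⟪α, x⟫ : ℝ) : ℂ)) ∧
        ∀ x : V N, ‖g x‖ ≤ C * ∑ j : Fin N, ⨆ x' : V N, ‖pd j f x'‖ := by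
  refine ⟨2, two_pos, ?_⟩
  intro ℓ f hf hbd α hα
  have hα2 : ‖α‖ ^ 2 = 2 := hR.normSq α hα
  have hfd : Differentiable ℝ f :=
    hf.differentiable (by exact_mod_cast Nat.succ_ne_zero ℓ)
  set γ : V N × ℝ → V N := fun p => p.1 + ((p.2 - 1) * ⟪α, p.1⟫) • α with hγdef
  set F : V N × ℝ → ℂ := fun p => fderiv ℝ f (γ p) α with hFdef
  have hγc : ContDiff ℝ (ℓ : ℕ) γ := by
    apply ContDiff.add contDiff_fst
    exact ContDiff.smul ((contDiff_snd.sub contDiff_const).mul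
      (contDiff_const.inner ℝ contDiff_fst)) contDiff_const
  have hFc : ContDiff ℝ (ℓ : ℕ) F := by
    have hd : ContDiff ℝ (ℓ : ℕ) (fderiv ℝ f) := hf.fderiv_right (by exact_mod_cast le_rfl)
    exact (hd.comp hγc).clm_apply contDiff_const
  refine ⟨fun x => ∫ t in (0:ℝ)..1, F (x, t), my_param_contDiff ℓ F hFc, ?_, ?_⟩
  · -- equality on ⟪α,x⟫ ≠ 0
    intro x hx
    set c : ℝ := ⟪α, x⟫ with hcdef
    have key : ∀ s : ℝ, HasDerivAt (fun s : ℝ => f (x + ((s - 1) * c) • α)) (c • F (x, s)) s := by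
      intro s
      have h1 : HasDerivAt (fun s : ℝ => x + ((s - 1) * c) • α) (c • α) s := by
        have h0 : HasDerivAt (fun s : ℝ => (s - 1) * c) c s := by
          simpa using ((hasDerivAt_id s).sub_const 1).mul_const c
        simpa using (h0.smul_const α).const_add x
      have h2 : HasFDerivAt f (fderiv ℝ f (γ (x, s))) (γ (x, s)) := (hfd _).hasFDerivAt
      have h3 := h2.comp_hasDerivAt s h1
      simpa [hFdef, hγdef, _root_.map_smul, Function.comp_def] using h3
    have hcont : Continuous fun s : ℝ => c • F (x, s) :=
      (hFc.continuous.comp (Continuous.prodMk_right x)).const_smul c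
    have hFTC := intervalIntegral.integral_eq_sub_of_hasDerivAt
      (fun s _ => key s) (hcont.intervalIntegrable 0 1)
    rw [intervalIntegral.integral_smul] at hFTC
    have hσ : sigma' α x = x + ((0 - 1) * c) • α := by
      simp only [sigma', hα2, hcdef]
      rw [real_inner_comm x α]
      module
    have hx1 : x + ((1 - 1) * c) • α = x := by simp
    rw [hx1, ← hσ] at hFTC
    have hcC : ((c : ℝ) : ℂ) ≠ 0 := by exact_mod_cast hx
    rw [eq_div_iff hcC, ← hFTC, Complex.real_smul, mul_comm]
  · -- the bound
    intro x
    have hS : ∀ (j : Fin N) (y : V N), ‖pd j f y‖ ≤ ⨆ x' : V N, ‖pd j f x'‖ := by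
      intro j y
      obtain ⟨M, hM⟩ := hbd j
      exact le_ciSup ⟨M, by rintro r ⟨y', rfl⟩; exact hM y'⟩ y
    have hαj : ∀ j : Fin N, |α j| ≤ 2 := by
      intro j
      have h1 : α j = ⟪EuclideanSpace.single j (1:ℝ), α⟫ := by
        simp [EuclideanSpace.inner_single_left]
      have h2 : |⟪EuclideanSpace.single j (1:ℝ), α⟫| ≤ ‖EuclideanSpace.single j (1:ℝ)‖ * ‖α‖ :=
        abs_real_inner_le_norm _ _
      rw [EuclideanSpace.norm_single, norm_one, one_mul] at h2
      have hn : 0 ≤ ‖α‖ := norm_nonneg _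
      rw [h1]
      nlinarith [h2, hα2, abs_nonneg (⟪EuclideanSpace.single j (1:ℝ), α⟫ : ℝ)]
    have hgen : ∀ y : V N, fderiv ℝ f y α = ∑ j : Fin N, α j • pd j f y := by
      intro y
      conv_lhs => rw [my_single_sum α]
      rw [map_sum]
      simp [pd, _root_.map_smul]
    have hbound : ∀ s : ℝ, ‖F (x, s)‖ ≤ ∑ j : Fin N, 2 * ⨆ x' : V N, ‖pd j f x'‖ := by
      intro s
      have hexp : F (x, s) = ∑ j : Fin N, α j • pd j f (γ (x, s)) := hgen (γ (x, s))
      rw [hexp]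
      refine (norm_sum_le _ _).trans (Finset.sum_le_sum fun j _ => ?_)
      rw [norm_smul, Real.norm_eq_abs]
      exact mul_le_mul (hαj j) (hS j _) (norm_nonneg _)
        (by norm_num)
    calc ‖∫ t in (0:ℝ)..1, F (x, t)‖
        ≤ (∑ j : Fin N, 2 * ⨆ x' : V N, ‖pd j f x'‖) * |1 - 0| :=
          intervalIntegral.norm_integral_le_of_norm_le_const fun t _ => hbound t
      _ = 2 * ∑ j : Fin N, ⨆ x' : V N, ‖pd j f x'‖ := by
          rw [Finset.mul_sum]; simp

/-- the divided difference `f^{α}` extends to a `C^ℓ` function,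
with a uniform bound by the sum of the sup-norms of the first partial derivatives. -/
theorem statement0 (N : ℕ) (R : Finset (V N)) (hR : IsNRS R) :
    ∃ C > (0 : ℝ), ∀ (ℓ : ℕ) (f : V N → ℂ), ContDiff ℝ (ℓ + 1 : ℕ) f →
      (∀ j : Fin N, ∃ M : ℝ, ∀ x : V N, ‖pd j f x‖ ≤ M) →
      ∀ α ∈ R, ∃ g : V N → ℂ, ContDiff ℝ (ℓ : ℕ) g ∧
        (∀ x : V N, ⟪α, x⟫ ≠ 0 →
          g x = (f x - f (sigma' α x)) / ((⟪α, x⟫ : ℝ) : ℂ)) ∧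
        ∀ x : V N, ‖g x‖ ≤ C * ∑ j : Fin N, ⨆ x' : V N, ‖pd j f x'‖ :=
  statement0_proof N R hR
end
end

section
/- Assume there is a constant C_h > 0 such that h_s(y,y) ≤ C_h / w(B(y,√s)) for all s > 0 and y ∈ ℝ^N. Then there is a constant C > 0 such that for all t > 0 and y ∈ ℝ^N, (∫_{B(0,1/t)} |𝐄(ξ,y)|² dw(ξ))^{1/2} ≤ C / w(B(y,t))^{1/2}. -/
open MeasureTheory Metric Complex
open scoped BigOperators ENNReal RealInnerProductSpace

noncomputable section

variable {N : ℕ}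

namespace S2Aux

lemma wfun_nonneg (R : Finset (V N)) (k : V N → ℝ) (x : V N) : 0 ≤ wfun R k x :=
  Finset.prod_nonneg fun α _ => Real.rpow_nonneg (abs_nonneg _) _

lemma wfun_continuous (R : Finset (V N)) (k : V N → ℝ) (hk : ∀ α ∈ R, 0 < k α) :
    Continuous (wfun R k) := by
  unfold wfun
  refine continuous_finset_prod _ (fun α hα => ?_)
  rw [continuous_iff_continuousAt]
  intro x
  exact (Real.continuousAt_rpow_const _ _ (Or.inr (hk α hα).le)).comp
    ((_root_.continuous_abs.comp (continuous_id.inner continuous_const)).continuousAt)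

lemma wfun_le (R : Finset (V N)) (k : V N → ℝ) (hR : IsNRS R) (hk : ∀ α ∈ R, 0 < k α)
    (x : V N) :
    wfun R k x ≤ Real.exp ((Real.sqrt 2 * (1 + ‖x‖)) * ∑ α ∈ R, k α) := by
  set b := Real.sqrt 2 * (1 + ‖x‖) with hb
  have hbpos : 0 < b := by
    have : (0:ℝ) < Real.sqrt 2 := Real.sqrt_pos.mpr (by norm_num)
    have h2 : (0:ℝ) < 1 + ‖x‖ := by positivity
    positivity
  calc wfun R k x ≤ ∏ α ∈ R, Real.exp (b * k α) := by
        refine Finset.prod_le_prod (fun α _ => Real.rpow_nonneg (abs_nonneg _) _)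
          (fun α hα => ?_)
        have hnα : ‖α‖ = Real.sqrt 2 := by
          rw [← hR.normSq α hα, Real.sqrt_sq (norm_nonneg α)]
        have h1 : |⟪x, α⟫| ≤ b := by
          calc |⟪x, α⟫| ≤ ‖x‖ * ‖α‖ := abs_real_inner_le_norm x α
          _ = Real.sqrt 2 * ‖x‖ := by rw [hnα]; ring
          _ ≤ b := by
              rw [hb]
              have := norm_nonneg x
              nlinarith [Real.sqrt_nonneg 2]
        calc |⟪x, α⟫| ^ (k α) ≤ b ^ (k α) :=
              Real.rpow_le_rpow (abs_nonneg _) h1 (hk α hα).le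
        _ ≤ Real.exp (b * k α) := by
            rw [Real.rpow_def_of_pos hbpos]
            exact Real.exp_le_exp.mpr
              (mul_le_mul_of_nonneg_right (Real.log_le_self hbpos.le) (hk α hα).le)
  _ = Real.exp (b * ∑ α ∈ R, k α) := by rw [← Real.exp_sum, ← Finset.mul_sum]

lemma integrable_gauss (s : ℝ) (hs : 0 < s) :
    Integrable (fun x : V N => Real.exp (-s * ‖x‖ ^ 2)) := by
  have h := (GaussianFourier.integrable_cexp_neg_mul_sq_norm_add (V := V N) (b := (s : ℂ))
    (by simpa using hs) 0 0).norm
  refine h.congr (Filter.Eventually.of_forall fun v => ?_)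
  simp only [Complex.norm_exp]
  congr 1
  simp [← Complex.ofReal_pow]

lemma key_ineq {a s r : ℝ} (hs : 0 < s) : a * r ≤ s / 2 * r ^ 2 + a ^ 2 / s := by
  have h1 : a ^ 2 / s * s = a ^ 2 := div_mul_cancel₀ _ hs.ne'
  nlinarith [sq_nonneg (s * r - a), sq_nonneg a, hs]

lemma integrable_exp_dw (R : Finset (V N)) (k : V N → ℝ) (hR : IsNRS R)
    (hk : ∀ α ∈ R, 0 < k α) (s : ℝ) (hs : 0 < s) :
    Integrable (fun x => Real.exp (-s * ‖x‖ ^ 2)) (dw R k) := by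
  rw [dw, integrable_withDensity_iff
    ((wfun_continuous R k hk).measurable.ennreal_ofReal)
    (Filter.Eventually.of_forall fun x => ENNReal.ofReal_lt_top)]
  have heq : (fun x : V N => Real.exp (-s * ‖x‖ ^ 2) * (ENNReal.ofReal (wfun R k x)).toReal)
      = fun x => Real.exp (-s * ‖x‖ ^ 2) * wfun R k x := by
    funext x; rw [ENNReal.toReal_ofReal (wfun_nonneg R k x)]
  rw [heq]
  set a := Real.sqrt 2 * ∑ α ∈ R, k α with ha
  have ha0 : 0 ≤ a :=
    mul_nonneg (Real.sqrt_nonneg _) (Finset.sum_nonneg fun α hα => (hk α hα).le)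
  have hcont : Continuous fun x : V N => Real.exp (-s * ‖x‖ ^ 2) * wfun R k x :=
    ((continuous_const.mul (continuous_norm.pow 2)).rexp).mul (wfun_continuous R k hk)
  refine (((integrable_gauss (N := N) (s / 2) (half_pos hs)).const_mul
    (Real.exp (a + a ^ 2 / s))).mono' hcont.aestronglyMeasurable
    (Filter.Eventually.of_forall fun x => ?_))
  have hnn : 0 ≤ wfun R k x := wfun_nonneg R k x
  rw [Real.norm_eq_abs, _root_.abs_of_nonneg (mul_nonneg (Real.exp_pos _).le hnn)]
  calc Real.exp (-s * ‖x‖ ^ 2) * wfun R k x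
      ≤ Real.exp (-s * ‖x‖ ^ 2) * Real.exp ((Real.sqrt 2 * (1 + ‖x‖)) * ∑ α ∈ R, k α) :=
        mul_le_mul_of_nonneg_left (wfun_le R k hR hk x) (Real.exp_pos _).le
  _ = Real.exp (-s * ‖x‖ ^ 2 + (a + a * ‖x‖)) := by
        rw [← Real.exp_add]; congr 1; rw [ha]; ring
  _ ≤ Real.exp (a + a ^ 2 / s) * Real.exp (-(s / 2) * ‖x‖ ^ 2) := by
        rw [← Real.exp_add]
        refine Real.exp_le_exp.mpr ?_
        have := key_ineq (a := a) (r := ‖x‖) hs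
        linarith
  _ = Real.exp (a + a ^ 2 / s) * Real.exp (-(s / 2) * ‖x‖ ^ 2) := rfl

end S2Aux

namespace S2Aux

lemma wfun_pos_ae (R : Finset (V N)) (k : V N → ℝ) (hR : IsNRS R) :
    ∀ᵐ x : V N, 0 < wfun R k x := by
  have h : ∀ α ∈ R, ∀ᵐ x : V N, ⟪x, α⟫ ≠ 0 := by
    intro α hα
    have hker : (volume : Measure (V N)) ((LinearMap.ker (innerSL ℝ α : V N →ₗ[ℝ] ℝ) : Submodule ℝ (V N)) : Set (V N)) = 0 := by
      refine Measure.addHaar_submodule _ _ (fun htop => ?_)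
      have hmem : α ∈ LinearMap.ker (innerSL ℝ α : V N →ₗ[ℝ] ℝ) := htop ▸ Submodule.mem_top
      have h0 : ⟪α, α⟫ = (0 : ℝ) := hmem
      have : α = 0 := inner_self_eq_zero.mp h0
      exact hR.ne_zero (this ▸ hα)
    rw [ae_iff]
    refine measure_mono_null (fun x hx => ?_) hker
    simp only [Set.mem_setOf_eq, not_not] at hx
    refine LinearMap.mem_ker.mpr ?_
    rw [real_inner_comm] at hx
    simpa using hx
  have hall : ∀ᵐ x : V N, ∀ α ∈ R, ⟪x, α⟫ ≠ 0 :=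
    (ae_ball_iff R.countable_toSet).mpr h
  filter_upwards [hall] with x hx
  exact Finset.prod_pos fun α hα => Real.rpow_pos_of_pos (abs_pos.mpr (hx α hα)) _

lemma dw_univ_pos (R : Finset (V N)) (k : V N → ℝ) (hR : IsNRS R) (hk : ∀ α ∈ R, 0 < k α) :
    0 < dw R k Set.univ := by
  rw [dw, withDensity_apply _ MeasurableSet.univ, Measure.restrict_univ,
    lintegral_pos_iff_support ((wfun_continuous R k hk).measurable.ennreal_ofReal)]
  have hsupp : {x : V N | 0 < wfun R k x} ⊆
      Function.support (fun x => ENNReal.ofReal (wfun R k x)) := by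
    intro x hx
    simp only [Function.mem_support, ne_eq, ENNReal.ofReal_eq_zero, not_le]
    exact hx
  have hpos : 0 < (volume : Measure (V N)) {x : V N | 0 < wfun R k x} := by
    rw [pos_iff_ne_zero]
    intro h0
    have hc : (volume : Measure (V N)) {x : V N | 0 < wfun R k x}ᶜ = 0 := by
      have := wfun_pos_ae R k hR
      rw [ae_iff] at this
      simpa [Set.compl_setOf] using this
    have huniv : (volume : Measure (V N)) Set.univ = 0 := by
      have hle := measure_union_le (μ := (volume : Measure (V N)))
        {x : V N | 0 < wfun R k x} {x : V N | 0 < wfun R k x}ᶜ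
      rw [Set.union_compl_self] at hle
      simpa [h0, hc] using hle
    exact (isOpen_univ.measure_ne_zero (volume : Measure (V N)) Set.univ_nonempty) huniv
  exact hpos.trans_le (measure_mono hsupp)

lemma ck_pos (R : Finset (V N)) (k : V N → ℝ) (hR : IsNRS R) (hk : ∀ α ∈ R, 0 < k α) :
    0 < ck R k := by
  have hform : (fun x : V N => Real.exp (-‖x‖ ^ 2 / 2))
      = fun x : V N => Real.exp (-(1/2 : ℝ) * ‖x‖ ^ 2) := by
    funext x; congr 1; ring
  have hint : Integrable (fun x : V N => Real.exp (-‖x‖ ^ 2 / 2)) (dw R k) := by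
    rw [hform]; exact integrable_exp_dw R k hR hk _ (by norm_num)
  rw [ck, integral_pos_iff_support_of_nonneg (fun x => (Real.exp_pos _).le) hint]
  have : Function.support (fun x : V N => Real.exp (-‖x‖ ^ 2 / 2)) = Set.univ := by
    ext x; simp [Real.exp_ne_zero]
  rw [this]
  exact dw_univ_pos R k hR hk

lemma foldr_iterate_zero (f : V N → ℂ) (l : List (Fin N)) :
    l.foldr (fun j g => (pd j)^[(0:ℕ)] g) f = f := by
  induction l with
  | nil => rfl
  | cons a l ih => simpa using ih

lemma Ek_le_one (Ek : V N → V N → ℂ)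
    (hEb : ∀ (x : V N) (β : Fin N → ℕ) (ξ : V N),
      ‖pdM β (fun ξ' => Ek ξ' x) ξ‖ ≤ ‖x‖ ^ (∑ j, β j)) (ξ y : V N) : ‖Ek ξ y‖ ≤ 1 := by
  have h := hEb y (fun _ => 0) ξ
  have hp : pdM (fun _ => (0:ℕ)) (fun ξ' => Ek ξ' y) = fun ξ' => Ek ξ' y :=
    foldr_iterate_zero _ _
  rw [hp] at h
  simpa using h

end S2Aux

/-- the `L²` estimate for the Dunkl kernel over balls `B(0,1/t)`. -/
theorem statement2 (N : ℕ) (R : Finset (V N)) (k : V N → ℝ)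
    (hR : IsNRS R) (hk : ∀ α ∈ R, 0 < k α)
    (hkG : ∀ α ∈ R, ∀ β ∈ R, k (sigma' α β) = k β)
    (Ek : V N → V N → ℂ)
    (hEsm : ∀ x : V N, ContDiff ℝ (⊤ : ℕ∞) fun ξ => Ek ξ x)
    (hEb : ∀ (x : V N) (β : Fin N → ℕ) (ξ : V N),
      ‖pdM β (fun ξ' => Ek ξ' x) ξ‖ ≤ ‖x‖ ^ (∑ j, β j))
    (C_h : ℝ) (hCh : 0 < C_h)
    (hheat : ∀ s : ℝ, 0 < s → ∀ y : V N,
      ‖heat R k Ek s y y‖ ≤ C_h / wB R k y (Real.sqrt s)) :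
    ∃ C > (0 : ℝ), ∀ t : ℝ, 0 < t → ∀ y : V N,
      Real.sqrt (∫ ξ in closedBall (0 : V N) (1 / t), ‖Ek ξ y‖ ^ 2 ∂(dw R k)) ≤
        C / Real.sqrt (wB R k y t) := by
  have hckpos : 0 < ck R k := S2Aux.ck_pos R k hR hk
  refine ⟨Real.sqrt (Real.exp 1 * ck R k * C_h),
    Real.sqrt_pos.mpr (mul_pos (mul_pos (Real.exp_pos 1) hckpos) hCh), ?_⟩
  intro t ht y
  set μ := dw R k with hμ
  have hEkc : Continuous fun ξ => Ek ξ y := (hEsm y).continuous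
  have hnc : Continuous fun ξ : V N => ‖Ek ξ y‖ ^ 2 := (hEkc.norm).pow 2
  have hEk1 : ∀ ξ : V N, ‖Ek ξ y‖ ≤ 1 := fun ξ => S2Aux.Ek_le_one Ek hEb ξ y
  have ht2 : (0:ℝ) < t ^ 2 := by positivity
  have hgint : Integrable (fun ξ : V N => Real.exp (-t ^ 2 * ‖ξ‖ ^ 2)) μ :=
    S2Aux.integrable_exp_dw R k hR hk _ ht2
  set f : V N → ℝ := fun ξ => Real.exp (-t ^ 2 * ‖ξ‖ ^ 2) * ‖Ek ξ y‖ ^ 2 with hfdef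
  have hfnn : ∀ ξ, 0 ≤ f ξ := fun ξ => mul_nonneg (Real.exp_pos _).le (sq_nonneg _)
  have hsq1 : ∀ ξ : V N, ‖Ek ξ y‖ ^ 2 ≤ 1 := fun ξ => by
    nlinarith [hEk1 ξ, norm_nonneg (Ek ξ y)]
  have hfle : ∀ ξ, f ξ ≤ Real.exp (-t ^ 2 * ‖ξ‖ ^ 2) := fun ξ => by
    calc f ξ ≤ Real.exp (-t ^ 2 * ‖ξ‖ ^ 2) * 1 :=
      mul_le_mul_of_nonneg_left (hsq1 ξ) (Real.exp_pos _).le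
    _ = Real.exp (-t ^ 2 * ‖ξ‖ ^ 2) := mul_one _
  have hfc : Continuous f := ((continuous_const.mul (continuous_norm.pow 2)).rexp).mul hnc
  have hfint : Integrable f μ :=
    hgint.mono' hfc.aestronglyMeasurable (Filter.Eventually.of_forall fun ξ => by
      rw [Real.norm_eq_abs, _root_.abs_of_nonneg (hfnn ξ)]; exact hfle ξ)
  set I := ∫ ξ, f ξ ∂μ with hI
  have hInn : 0 ≤ I := integral_nonneg hfnn
  -- heat identity
  have hheatval : heat R k Ek (t ^ 2) y y = ((ck R k : ℝ) : ℂ)⁻¹ * ((I : ℝ) : ℂ) := by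
    rw [heat]
    congr 1
    have hint2 : (∫ ξ, ((Real.exp (-t ^ 2 * ‖ξ‖ ^ 2) : ℝ) : ℂ) * Ek ξ y *
        (starRingEnd ℂ) (Ek ξ y) ∂(dw R k)) = ∫ ξ, ((f ξ : ℝ) : ℂ) ∂(dw R k) := by
      congr 1
      funext ξ
      rw [mul_assoc, Complex.mul_conj]
      simp only [Complex.normSq_eq_norm_sq, hfdef]
      push_cast
      ring
    rw [hint2, hI, hμ]
    exact integral_ofReal
  have hheatnorm : ‖heat R k Ek (t ^ 2) y y‖ = (ck R k)⁻¹ * I := by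
    rw [hheatval, norm_mul, norm_inv, Complex.norm_real, Complex.norm_real,
      Real.norm_eq_abs, Real.norm_eq_abs, _root_.abs_of_pos hckpos, _root_.abs_of_nonneg hInn]
  have hIle : I ≤ ck R k * C_h / wB R k y t := by
    have h := hheat (t ^ 2) ht2 y
    rw [Real.sqrt_sq ht.le, hheatnorm] at h
    calc I = ck R k * ((ck R k)⁻¹ * I) := by field_simp
    _ ≤ ck R k * (C_h / wB R k y t) := mul_le_mul_of_nonneg_left h hckpos.le
    _ = ck R k * C_h / wB R k y t := by ring
  -- set integral estimate
  have hball : ∀ ξ ∈ closedBall (0 : V N) (1 / t),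
      (1:ℝ) ≤ Real.exp 1 * Real.exp (-t ^ 2 * ‖ξ‖ ^ 2) := by
    intro ξ hξ
    rw [← Real.exp_add]
    refine Real.one_le_exp ?_
    have hξn : ‖ξ‖ ≤ 1 / t := by
      simpa [mem_closedBall, dist_zero_right] using hξ
    have h1 : t * ‖ξ‖ ≤ 1 := by
      have h2 := mul_le_mul_of_nonneg_left hξn ht.le
      rwa [mul_one_div, div_self ht.ne'] at h2
    have h2 : t ^ 2 * ‖ξ‖ ^ 2 ≤ 1 := by
      nlinarith [h1, mul_nonneg ht.le (norm_nonneg ξ)]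
    linarith
  have hptwise : ∀ ξ ∈ closedBall (0 : V N) (1 / t),
      ‖Ek ξ y‖ ^ 2 ≤ Real.exp 1 * f ξ := by
    intro ξ hξ
    calc ‖Ek ξ y‖ ^ 2 = 1 * ‖Ek ξ y‖ ^ 2 := (one_mul _).symm
    _ ≤ (Real.exp 1 * Real.exp (-t ^ 2 * ‖ξ‖ ^ 2)) * ‖Ek ξ y‖ ^ 2 :=
        mul_le_mul_of_nonneg_right (hball ξ hξ) (sq_nonneg _)
    _ = Real.exp 1 * f ξ := by rw [hfdef]; ring
  have hgOn : IntegrableOn (fun ξ => Real.exp 1 * f ξ) (closedBall (0 : V N) (1 / t)) μ :=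
    (hfint.const_mul _).integrableOn
  have hfOn : IntegrableOn (fun ξ : V N => ‖Ek ξ y‖ ^ 2) (closedBall (0 : V N) (1 / t)) μ := by
    refine hgOn.mono' hnc.aestronglyMeasurable.restrict ?_
    rw [ae_restrict_iff' measurableSet_closedBall]
    refine Filter.Eventually.of_forall fun ξ hξ => ?_
    rw [Real.norm_eq_abs, _root_.abs_of_nonneg (sq_nonneg _)]
    exact hptwise ξ hξ
  have hmono : ∫ ξ in closedBall (0 : V N) (1 / t), ‖Ek ξ y‖ ^ 2 ∂μ
      ≤ ∫ ξ in closedBall (0 : V N) (1 / t), Real.exp 1 * f ξ ∂μ :=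
    setIntegral_mono_on hfOn hgOn measurableSet_closedBall hptwise
  have hmono2 : ∫ ξ in closedBall (0 : V N) (1 / t), Real.exp 1 * f ξ ∂μ
      ≤ Real.exp 1 * I := by
    rw [integral_const_mul]
    exact mul_le_mul_of_nonneg_left
      (setIntegral_le_integral hfint (Filter.Eventually.of_forall hfnn)) (Real.exp_pos 1).le
  have hfinal : ∫ ξ in closedBall (0 : V N) (1 / t), ‖Ek ξ y‖ ^ 2 ∂μ
      ≤ Real.exp 1 * ck R k * C_h / wB R k y t := by
    calc ∫ ξ in closedBall (0 : V N) (1 / t), ‖Ek ξ y‖ ^ 2 ∂μ ≤ Real.exp 1 * I :=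
      hmono.trans hmono2
    _ ≤ Real.exp 1 * (ck R k * C_h / wB R k y t) :=
      mul_le_mul_of_nonneg_left hIle (Real.exp_pos 1).le
    _ = Real.exp 1 * ck R k * C_h / wB R k y t := by ring
  have hs := Real.sqrt_le_sqrt hfinal
  rwa [Real.sqrt_div (by positivity) _] at hs
end
end

section
/- Let ε₁ ∈ (0,1]. Assume: (i) there is C_h > 0 with h_s(y,y) ≤ C_h / w(B(y,√s)) for all s > 0 and y; (ii) the inverse-transform Plancherel identity holds: for every m ∈ L¹(dw) ∩ L²(dw;ℂ), ∫ |c_k^{-1}∫ m(ξ) 𝐄(ξ,x) dw(ξ)|² dw(x) = ∫ |m(ξ)|² dw(ξ); (iii) there is C_r > 0 such that |h_s(x,y) − h_s(x,y′)| ≤ C_r (‖y−y′‖/√s)^{ε₁} (h_{2s}(x,y) + h_{2s}(x,y′)) for all x, y, y′ ∈ ℝ^N and s > 0. Then there is C > 0 such that for all t > 0 and y, y′ ∈ ℝ^N, (∫_{B(0,1/t)} |𝐄(ξ,y) − 𝐄(ξ,y′)|² dw(ξ))^{1/2} ≤ C (‖y−y′‖/t)^{ε₁} (w(B(y,t))^{−1/2}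 + w(B(y′,t))^{−1/2}). -/
open MeasureTheory Metric Complex
open scoped BigOperators ENNReal RealInnerProductSpace

noncomputable section

variable {N : ℕ}

section AuxLemmas

variable {N : ℕ}

lemma pdM_zero_eq (f : V N → ℂ) : pdM (fun _ => 0) f = f := by
  unfold pdM
  induction (Finset.univ : Finset (Fin N)).toList with
  | nil => rfl
  | cons a l ih => simpa using ih

lemma wfun_nonneg (R : Finset (V N)) (k : V N → ℝ) (x : V N) : 0 ≤ wfun R k x :=
  Finset.prod_nonneg fun α _ => Real.rpow_nonneg (abs_nonneg _) _

lemma wfun_continuous (R : Finset (V N)) (k : V N → ℝ) (hk : ∀ α ∈ R, 0 ≤ k α) :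
    Continuous (wfun R k) := by
  unfold wfun
  refine continuous_finset_prod _ fun α hα => ?_
  exact (Real.continuous_rpow_const (hk α hα)).comp ((continuous_id.inner continuous_const).abs)

lemma gauss_integrable {c : ℝ} (hc : 0 < c) :
    Integrable (fun x : V N => Real.exp (-c * ‖x‖ ^ 2)) := by
  have h := (GaussianFourier.integrable_cexp_neg_mul_sq_norm_add_of_euclideanSpace (ι := Fin N)
    (b := (c : ℂ)) (by simpa using hc) 0 (0 : V N)).norm
  refine h.congr (Filter.Eventually.of_forall fun v => ?_)
  show ‖Complex.exp _‖ = _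
  rw [Complex.norm_exp]
  norm_num
  left
  norm_cast

lemma key_bound {c : ℝ} (hc : 0 < c) (M : ℕ) :
    ∃ K > (0:ℝ), ∀ u : ℝ, 0 ≤ u →
      (Real.sqrt 2 * (1 + u)) ^ M ≤ K * Real.exp (c / 2 * u) := by
  set ε : ℝ := min 1 (c / (2 * (M + 1))) with hεdef
  have hε0 : 0 < ε := lt_min one_pos (by positivity)
  have hε1 : ε ≤ 1 := min_le_left _ _
  have hεc : ε ≤ c / (2 * (M + 1)) := min_le_right _ _
  refine ⟨(Real.sqrt 2 / ε) ^ M, by positivity, fun u hu => ?_⟩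
  have h2 : 1 + ε * u ≤ Real.exp (ε * u) := by
    have := Real.add_one_le_exp (ε * u); linarith
  have h1 : 1 + u ≤ ε⁻¹ * Real.exp (ε * u) := by
    have key : ε * (1 + u) ≤ Real.exp (ε * u) := by nlinarith
    calc 1 + u = ε⁻¹ * (ε * (1 + u)) := by field_simp
      _ ≤ ε⁻¹ * Real.exp (ε * u) := mul_le_mul_of_nonneg_left key (by positivity)
  have h3 : Real.sqrt 2 * (1 + u) ≤ Real.sqrt 2 / ε * Real.exp (ε * u) := by
    rw [div_eq_mul_inv, mul_assoc]
    exact mul_le_mul_of_nonneg_left h1 (Real.sqrt_nonneg 2)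
  calc (Real.sqrt 2 * (1 + u)) ^ M
      ≤ (Real.sqrt 2 / ε * Real.exp (ε * u)) ^ M := by
        apply pow_le_pow_left₀ (by positivity) h3
    _ = (Real.sqrt 2 / ε) ^ M * Real.exp (ε * u) ^ M := mul_pow _ _ _
    _ = (Real.sqrt 2 / ε) ^ M * Real.exp (M * (ε * u)) := by rw [Real.exp_nat_mul]
    _ ≤ (Real.sqrt 2 / ε) ^ M * Real.exp (c / 2 * u) := by
        apply mul_le_mul_of_nonneg_left _ (by positivity)
        apply Real.exp_le_exp.mpr
        have : (M:ℝ) * ε ≤ c / 2 := by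
          have h4 : (M:ℝ) * ε ≤ M * (c / (2 * (M + 1))) :=
            mul_le_mul_of_nonneg_left hεc (Nat.cast_nonneg M)
          have h5 : (M:ℝ) * (c / (2 * (M + 1))) ≤ c / 2 := by
            rw [show (M:ℝ) * (c / (2 * (M + 1))) = c * ((M:ℝ) / (M + 1)) / 2 by
              field_simp]
            have hle : (M:ℝ) / (M + 1) ≤ 1 := by
              rw [div_le_one (by positivity)]; linarith
            have := mul_le_mul_of_nonneg_left hle hc.le
            linarith
          linarith
        calc (M:ℝ) * (ε * u) = ((M:ℝ) * ε) * u := by ring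
          _ ≤ c / 2 * u := mul_le_mul_of_nonneg_right this hu
  
lemma wfun_le (R : Finset (V N)) (k : V N → ℝ) (hk : ∀ α ∈ R, 0 ≤ k α)
    (hR2 : ∀ α ∈ R, ‖α‖ ^ 2 = 2) (x : V N) :
    wfun R k x ≤ (Real.sqrt 2 * (1 + ‖x‖ ^ 2)) ^ (∑ α ∈ R, ⌈k α⌉₊) := by
  have hb1 : (1:ℝ) ≤ Real.sqrt 2 * (1 + ‖x‖ ^ 2) := by
    have h2 : (1:ℝ) ≤ Real.sqrt 2 := by
      rw [show (1:ℝ) = Real.sqrt 1 by simp]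
      exact Real.sqrt_le_sqrt (by norm_num)
    nlinarith [sq_nonneg ‖x‖, Real.sqrt_nonneg 2]
  rw [← Finset.prod_pow_eq_pow_sum]
  refine Finset.prod_le_prod (fun α _ => Real.rpow_nonneg (abs_nonneg _) _) fun α hα => ?_
  have hnorm : ‖α‖ = Real.sqrt 2 := by
    rw [← hR2 α hα, Real.sqrt_sq (norm_nonneg α)]
  have hib : |⟪x, α⟫| ≤ Real.sqrt 2 * (1 + ‖x‖ ^ 2) := by
    have h1 : |⟪x, α⟫| ≤ ‖x‖ * ‖α‖ := abs_real_inner_le_norm x α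
    rw [hnorm] at h1
    nlinarith [Real.sqrt_nonneg 2, norm_nonneg x, sq_nonneg (‖x‖ - 1)]
  calc |⟪x, α⟫| ^ k α ≤ (Real.sqrt 2 * (1 + ‖x‖ ^ 2)) ^ k α :=
        Real.rpow_le_rpow (abs_nonneg _) hib (hk α hα)
    _ ≤ (Real.sqrt 2 * (1 + ‖x‖ ^ 2)) ^ ((⌈k α⌉₊ : ℕ) : ℝ) :=
        Real.rpow_le_rpow_of_exponent_le hb1 (Nat.le_ceil _)
    _ = (Real.sqrt 2 * (1 + ‖x‖ ^ 2)) ^ (⌈k α⌉₊ : ℕ) := Real.rpow_natCast _ _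

lemma dw_integrable_gauss (R : Finset (V N)) (k : V N → ℝ) (hk : ∀ α ∈ R, 0 ≤ k α)
    (hR2 : ∀ α ∈ R, ‖α‖ ^ 2 = 2) {c : ℝ} (hc : 0 < c) :
    Integrable (fun ξ : V N => Real.exp (-c * ‖ξ‖ ^ 2)) (dw R k) := by
  rw [dw, integrable_withDensity_iff
    ((wfun_continuous R k hk).measurable.ennreal_ofReal)
    (Filter.Eventually.of_forall fun x => ENNReal.ofReal_lt_top)]
  obtain ⟨K, hK, hKb⟩ := key_bound hc (∑ α ∈ R, ⌈k α⌉₊)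
  have hint : Integrable (fun x : V N => K * Real.exp (-(c/2) * ‖x‖ ^ 2)) :=
    (gauss_integrable (by positivity)).const_mul K
  refine hint.mono' ?_ (Filter.Eventually.of_forall fun x => ?_)
  · exact ((Real.continuous_exp.comp (by continuity)).measurable.mul
      ((wfun_continuous R k hk).measurable.ennreal_ofReal.ennreal_toReal)).aestronglyMeasurable
  · have hw0 := wfun_nonneg R k x
    rw [ENNReal.toReal_ofReal hw0, Real.norm_eq_abs,
      _root_.abs_of_nonneg (mul_nonneg (Real.exp_pos _).le hw0)]
    have h1 := wfun_le R k hk hR2 x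
    have h2 := hKb (‖x‖ ^ 2) (sq_nonneg _)
    have h3 : Real.exp (-c * ‖x‖ ^ 2) * wfun R k x
        ≤ Real.exp (-c * ‖x‖ ^ 2) * (K * Real.exp (c / 2 * ‖x‖ ^ 2)) := by
      apply mul_le_mul_of_nonneg_left _ (Real.exp_pos _).le
      exact le_trans h1 h2
    calc Real.exp (-c * ‖x‖ ^ 2) * wfun R k x
        ≤ Real.exp (-c * ‖x‖ ^ 2) * (K * Real.exp (c / 2 * ‖x‖ ^ 2)) := h3
      _ = K * Real.exp (-(c/2) * ‖x‖ ^ 2) := by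
          rw [mul_comm, mul_assoc, ← Real.exp_add]; ring_nf

lemma hyperplane_null (α : V N) (hα : α ≠ 0) :
    (volume : Measure (V N)) {x : V N | ⟪x, α⟫ = 0} = 0 := by
  have hset : {x : V N | ⟪x, α⟫ = 0} = (LinearMap.ker (innerSL ℝ α : V N →ₗ[ℝ] ℝ) : Set (V N)) := by
    ext x
    simp only [Set.mem_setOf_eq, SetLike.mem_coe, LinearMap.mem_ker,
      ContinuousLinearMap.coe_coe, innerSL_apply_apply]
    rw [real_inner_comm]
  rw [hset]
  apply Measure.addHaar_submodule
  intro htop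
  apply hα
  have hmem : α ∈ LinearMap.ker (innerSL ℝ α : V N →ₗ[ℝ] ℝ) := htop.symm ▸ Submodule.mem_top
  rw [LinearMap.mem_ker] at hmem
  simp only [ContinuousLinearMap.coe_coe, innerSL_apply_apply] at hmem
  exact inner_self_eq_zero.mp hmem

lemma wfun_ae_pos (R : Finset (V N)) (k : V N → ℝ) (hR : IsNRS R) :
    ∀ᵐ x ∂(volume : Measure (V N)), 0 < wfun R k x := by
  have h1 : ∀ᵐ x ∂(volume : Measure (V N)), ∀ α ∈ R, ⟪x, α⟫ ≠ (0:ℝ) := by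
    simp only [← Finset.mem_coe]
    rw [MeasureTheory.ae_ball_iff R.countable_toSet]
    intro α hα
    rw [Finset.mem_coe] at hα
    have hα0 : α ≠ 0 := fun h => hR.ne_zero (h ▸ hα)
    rw [ae_iff]
    simpa using hyperplane_null α hα0
  filter_upwards [h1] with x hx
  exact Finset.prod_pos fun α hα => Real.rpow_pos_of_pos (abs_pos.mpr (hx α hα)) _

lemma dw_ne_zero (R : Finset (V N)) (k : V N → ℝ) (hR : IsNRS R)
    (hk : ∀ α ∈ R, 0 ≤ k α) : dw R k ≠ 0 := by
  intro h0
  have h1 : dw R k Set.univ = 0 := by rw [h0]; rfl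
  rw [dw, withDensity_apply _ MeasurableSet.univ, setLIntegral_univ] at h1
  have h2 := (lintegral_eq_zero_iff
    ((wfun_continuous R k hk).measurable.ennreal_ofReal)).mp h1
  have h3 := wfun_ae_pos R k hR
  obtain ⟨x, hx1, hx2⟩ := (h3.and h2).exists
  rw [Pi.zero_apply, ENNReal.ofReal_eq_zero] at hx2
  linarith

lemma ck_pos (R : Finset (V N)) (k : V N → ℝ) (hR : IsNRS R) (hk : ∀ α ∈ R, 0 ≤ k α) :
    0 < ck R k := by
  have hint : Integrable (fun x : V N => Real.exp (-‖x‖ ^ 2 / 2)) (dw R k) := by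
    refine (dw_integrable_gauss R k hk hR.normSq (c := (2:ℝ)⁻¹) (by norm_num)).congr
      (Filter.Eventually.of_forall fun x => ?_)
    ring_nf
  rw [ck, integral_pos_iff_support_of_nonneg (fun x => (Real.exp_pos _).le) hint]
  have hsupp : (Function.support fun x : V N => Real.exp (-‖x‖ ^ 2 / 2)) = Set.univ :=
    Set.eq_univ_of_forall fun x => Real.exp_ne_zero _
  rw [hsupp]
  exact Measure.measure_univ_pos.mpr (dw_ne_zero R k hR hk)

end AuxLemmas

section Helpers

variable {N : ℕ}

lemma intgen (R : Finset (V N)) (k : V N → ℝ) (hk0 : ∀ α ∈ R, 0 ≤ k α)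
    (hR2 : ∀ α ∈ R, ‖α‖ ^ 2 = 2) {c : ℝ} (hc : 0 < c)
    (g : V N → ℂ) (hgc : Continuous g) (hgb : ∀ ξ, ‖g ξ‖ ≤ 2) :
    Integrable (fun ξ => ((Real.exp (-c * ‖ξ‖ ^ 2) : ℝ) : ℂ) * g ξ) (dw R k) := by
  have hexpC : Continuous (fun ξ : V N => ((Real.exp (-c * ‖ξ‖ ^ 2) : ℝ) : ℂ)) :=
    Complex.continuous_ofReal.comp
      (Real.continuous_exp.comp (continuous_const.mul (continuous_norm.pow 2)))
  refine ((dw_integrable_gauss R k hk0 hR2 hc).const_mul 2).mono'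
    ((hexpC.mul hgc).aestronglyMeasurable)
    (Filter.Eventually.of_forall fun ξ => ?_)
  rw [norm_mul, Complex.norm_real, Real.norm_eq_abs,
    _root_.abs_of_nonneg (Real.exp_pos _).le]
  calc Real.exp (-c * ‖ξ‖ ^ 2) * ‖g ξ‖ ≤ Real.exp (-c * ‖ξ‖ ^ 2) * 2 :=
        mul_le_mul_of_nonneg_left (hgb ξ) (Real.exp_pos _).le
    _ = 2 * Real.exp (-c * ‖ξ‖ ^ 2) := by ring

lemma memgen (R : Finset (V N)) (k : V N → ℝ) (hk0 : ∀ α ∈ R, 0 ≤ k α)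
    (hR2 : ∀ α ∈ R, ‖α‖ ^ 2 = 2) {c : ℝ} (hc : 0 < c)
    (g : V N → ℂ) (hgc : Continuous g) (hgb : ∀ ξ, ‖g ξ‖ ≤ 2) :
    MemLp (fun ξ => ((Real.exp (-c * ‖ξ‖ ^ 2) : ℝ) : ℂ) * g ξ) 2 (dw R k) := by
  have hexpC : Continuous (fun ξ : V N => ((Real.exp (-c * ‖ξ‖ ^ 2) : ℝ) : ℂ)) :=
    Complex.continuous_ofReal.comp
      (Real.continuous_exp.comp (continuous_const.mul (continuous_norm.pow 2)))
  have hmc : Continuous (fun ξ : V N => ((Real.exp (-c * ‖ξ‖ ^ 2) : ℝ) : ℂ) * g ξ) :=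
    hexpC.mul hgc
  rw [memLp_two_iff_integrable_sq_norm hmc.aestronglyMeasurable]
  refine ((dw_integrable_gauss R k hk0 hR2 (c := 2*c) (by positivity)).const_mul 4).mono'
    (((continuous_norm.comp hmc).pow 2)).aestronglyMeasurable
    (Filter.Eventually.of_forall fun ξ => ?_)
  rw [Real.norm_eq_abs, _root_.abs_of_nonneg (by positivity)]
  rw [norm_mul, Complex.norm_real, Real.norm_eq_abs,
    _root_.abs_of_nonneg (Real.exp_pos _).le]
  have h2 : Real.exp (-c * ‖ξ‖ ^ 2) ^ 2 = Real.exp (-(2*c) * ‖ξ‖ ^ 2) := by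
    rw [sq, ← Real.exp_add]; congr 1; ring
  have h1 : (Real.exp (-c * ‖ξ‖ ^ 2) * ‖g ξ‖) ^ 2
      ≤ Real.exp (-c * ‖ξ‖ ^ 2) ^ 2 * 4 := by
    have hg2 : ‖g ξ‖ ^ 2 ≤ 4 := by nlinarith [hgb ξ, norm_nonneg (g ξ)]
    calc (Real.exp (-c * ‖ξ‖ ^ 2) * ‖g ξ‖) ^ 2
        = Real.exp (-c * ‖ξ‖ ^ 2) ^ 2 * ‖g ξ‖ ^ 2 := by ring
      _ ≤ Real.exp (-c * ‖ξ‖ ^ 2) ^ 2 * 4 := mul_le_mul_of_nonneg_left hg2 (sq_nonneg _)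
  calc (Real.exp (-c * ‖ξ‖ ^ 2) * ‖g ξ‖) ^ 2 ≤ Real.exp (-c * ‖ξ‖ ^ 2) ^ 2 * 4 := h1
    _ = 4 * Real.exp (-(2*c) * ‖ξ‖ ^ 2) := by rw [h2]; ring

lemma planch_diag (R : Finset (V N)) (k : V N → ℝ) (hk0 : ∀ α ∈ R, 0 ≤ k α)
    (hR2 : ∀ α ∈ R, ‖α‖ ^ 2 = 2) (Ek : V N → V N → ℂ)
    (hEcont : ∀ x : V N, Continuous fun ξ => Ek ξ x) (hE1 : ∀ ξ x : V N, ‖Ek ξ x‖ ≤ 1)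
    (hPlanch : ∀ m : V N → ℂ, Integrable m (dw R k) → MemLp m 2 (dw R k) →
      (∫ x, ‖((ck R k : ℝ) : ℂ)⁻¹ * ∫ ξ, m ξ * Ek ξ x ∂(dw R k)‖ ^ 2 ∂(dw R k)) =
        ∫ ξ, ‖m ξ‖ ^ 2 ∂(dw R k))
    {c : ℝ} (hc : 0 < c) (z : V N) :
    (∫ x, ‖heat R k Ek c x z‖ ^ 2 ∂(dw R k)) =
      ∫ ξ, Real.exp (-(2*c) * ‖ξ‖ ^ 2) * ‖Ek ξ z‖ ^ 2 ∂(dw R k) := by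
  have hgc : Continuous fun ξ => (starRingEnd ℂ) (Ek ξ z) := (hEcont z).star
  have hgb : ∀ ξ, ‖(starRingEnd ℂ) (Ek ξ z)‖ ≤ 2 := fun ξ => by
    rw [RCLike.norm_conj]; linarith [hE1 ξ z]
  have h := hPlanch _ (intgen R k hk0 hR2 hc _ hgc hgb) (memgen R k hk0 hR2 hc _ hgc hgb)
  have hL : ∀ x : V N, (((ck R k : ℝ) : ℂ)⁻¹ *
      ∫ ξ, (((Real.exp (-c * ‖ξ‖ ^ 2) : ℝ) : ℂ) * (starRingEnd ℂ) (Ek ξ z)) * Ek ξ x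
        ∂(dw R k)) = heat R k Ek c x z := by
    intro x
    rw [heat]
    congr 1
    exact integral_congr_ae (Filter.Eventually.of_forall fun ξ => by ring)
  simp only [hL] at h
  rw [h]
  refine integral_congr_ae (Filter.Eventually.of_forall fun ξ => ?_)
  simp only [norm_mul, Complex.norm_real, Real.norm_eq_abs, RCLike.norm_conj]
  rw [_root_.abs_of_nonneg (Real.exp_pos _).le, mul_pow]
  congr 1
  rw [sq, ← Real.exp_add]; congr 1; ring

lemma planch_diff (R : Finset (V N)) (k : V N → ℝ) (hk0 : ∀ α ∈ R, 0 ≤ k α)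
    (hR2 : ∀ α ∈ R, ‖α‖ ^ 2 = 2) (Ek : V N → V N → ℂ)
    (hEcont : ∀ x : V N, Continuous fun ξ => Ek ξ x) (hE1 : ∀ ξ x : V N, ‖Ek ξ x‖ ≤ 1)
    (hPlanch : ∀ m : V N → ℂ, Integrable m (dw R k) → MemLp m 2 (dw R k) →
      (∫ x, ‖((ck R k : ℝ) : ℂ)⁻¹ * ∫ ξ, m ξ * Ek ξ x ∂(dw R k)‖ ^ 2 ∂(dw R k)) =
        ∫ ξ, ‖m ξ‖ ^ 2 ∂(dw R k))
    {c : ℝ} (hc : 0 < c) (z z' : V N) :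
    (∫ x, ‖heat R k Ek c x z - heat R k Ek c x z'‖ ^ 2 ∂(dw R k)) =
      ∫ ξ, Real.exp (-(2*c) * ‖ξ‖ ^ 2) * ‖Ek ξ z - Ek ξ z'‖ ^ 2 ∂(dw R k) := by
  have hgc : Continuous fun ξ => (starRingEnd ℂ) (Ek ξ z) - (starRingEnd ℂ) (Ek ξ z') :=
    ((hEcont z).star).sub ((hEcont z').star)
  have hgb : ∀ ξ, ‖(starRingEnd ℂ) (Ek ξ z) - (starRingEnd ℂ) (Ek ξ z')‖ ≤ 2 := fun ξ =>
    (norm_sub_le _ _).trans (by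
      rw [RCLike.norm_conj, RCLike.norm_conj]; linarith [hE1 ξ z, hE1 ξ z'])
  have h := hPlanch _ (intgen R k hk0 hR2 hc _ hgc hgb) (memgen R k hk0 hR2 hc _ hgc hgb)
  have hL : ∀ x : V N, (((ck R k : ℝ) : ℂ)⁻¹ *
      ∫ ξ, (((Real.exp (-c * ‖ξ‖ ^ 2) : ℝ) : ℂ) *
          ((starRingEnd ℂ) (Ek ξ z) - (starRingEnd ℂ) (Ek ξ z'))) * Ek ξ x ∂(dw R k)) =
        heat R k Ek c x z - heat R k Ek c x z' := by
    intro x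
    have hI1 : Integrable (fun ξ => ((Real.exp (-c * ‖ξ‖ ^ 2) : ℝ) : ℂ) *
        ((starRingEnd ℂ) (Ek ξ z) * Ek ξ x)) (dw R k) := by
      refine intgen R k hk0 hR2 hc _ (((hEcont z).star).mul (hEcont x)) fun ξ => ?_
      rw [norm_mul, RCLike.norm_conj]
      nlinarith [hE1 ξ z, hE1 ξ x, norm_nonneg (Ek ξ z), norm_nonneg (Ek ξ x)]
    have hI2 : Integrable (fun ξ => ((Real.exp (-c * ‖ξ‖ ^ 2) : ℝ) : ℂ) *
        ((starRingEnd ℂ) (Ek ξ z') * Ek ξ x)) (dw R k) := by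
      refine intgen R k hk0 hR2 hc _ (((hEcont z').star).mul (hEcont x)) fun ξ => ?_
      rw [norm_mul, RCLike.norm_conj]
      nlinarith [hE1 ξ z', hE1 ξ x, norm_nonneg (Ek ξ z'), norm_nonneg (Ek ξ x)]
    have hsplit : (fun ξ => (((Real.exp (-c * ‖ξ‖ ^ 2) : ℝ) : ℂ) *
          ((starRingEnd ℂ) (Ek ξ z) - (starRingEnd ℂ) (Ek ξ z'))) * Ek ξ x) =
        fun ξ => (((Real.exp (-c * ‖ξ‖ ^ 2) : ℝ) : ℂ) *
          ((starRingEnd ℂ) (Ek ξ z) * Ek ξ x)) -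
          (((Real.exp (-c * ‖ξ‖ ^ 2) : ℝ) : ℂ) *
          ((starRingEnd ℂ) (Ek ξ z') * Ek ξ x)) := funext fun ξ => by ring
    rw [hsplit, integral_sub hI1 hI2, mul_sub]
    congr 1
    · rw [heat]; congr 1
      exact integral_congr_ae (Filter.Eventually.of_forall fun ξ => by ring)
    · rw [heat]; congr 1
      exact integral_congr_ae (Filter.Eventually.of_forall fun ξ => by ring)
  simp only [hL] at h
  rw [h]
  refine integral_congr_ae (Filter.Eventually.of_forall fun ξ => ?_)
  simp only [show ∀ ξ : V N, (starRingEnd ℂ) (Ek ξ z) - (starRingEnd ℂ) (Ek ξ z') =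
      (starRingEnd ℂ) (Ek ξ z - Ek ξ z') from fun ξ => (map_sub _ _ _).symm,
    norm_mul, RCLike.norm_conj, Complex.norm_real, Real.norm_eq_abs]
  rw [_root_.abs_of_nonneg (Real.exp_pos _).le, mul_pow]
  congr 1
  rw [sq, ← Real.exp_add]; congr 1; ring

lemma heat_diag (R : Finset (V N)) (k : V N → ℝ) (hck : 0 < ck R k)
    (Ek : V N → V N → ℂ) {c : ℝ} (hc : 0 < c) (z : V N) :
    (∫ ξ, Real.exp (-(2*c) * ‖ξ‖ ^ 2) * ‖Ek ξ z‖ ^ 2 ∂(dw R k)) =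
      ck R k * ‖heat R k Ek (2*c) z z‖ := by
  have hre : heat R k Ek (2*c) z z = ((ck R k : ℝ) : ℂ)⁻¹ *
      ((∫ ξ, Real.exp (-(2*c) * ‖ξ‖ ^ 2) * ‖Ek ξ z‖ ^ 2 ∂(dw R k) : ℝ) : ℂ) := by
    rw [heat]
    congr 1
    rw [show ((∫ ξ, Real.exp (-(2*c) * ‖ξ‖ ^ 2) * ‖Ek ξ z‖ ^ 2 ∂(dw R k) : ℝ) : ℂ) =
      ∫ ξ, ((Real.exp (-(2*c) * ‖ξ‖ ^ 2) * ‖Ek ξ z‖ ^ 2 : ℝ) : ℂ) ∂(dw R k) from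
      (integral_ofReal (𝕜 := ℂ)).symm]
    refine integral_congr_ae (Filter.Eventually.of_forall fun ξ => ?_)
    simp only [mul_assoc, Complex.mul_conj, Complex.normSq_eq_norm_sq]
    norm_cast
  have hr0 : 0 ≤ ∫ ξ, Real.exp (-(2*c) * ‖ξ‖ ^ 2) * ‖Ek ξ z‖ ^ 2 ∂(dw R k) :=
    integral_nonneg fun ξ => by positivity
  rw [hre, norm_mul, norm_inv, Complex.norm_real, Complex.norm_real,
    Real.norm_eq_abs, Real.norm_eq_abs, _root_.abs_of_pos hck, _root_.abs_of_nonneg hr0]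
  field_simp

lemma heat_vanish (R : Finset (V N)) (k : V N → ℝ) (hk0 : ∀ α ∈ R, 0 ≤ k α)
    (hR2 : ∀ α ∈ R, ‖α‖ ^ 2 = 2) (Ek : V N → V N → ℂ)
    (hEcont : ∀ x : V N, Continuous fun ξ => Ek ξ x) (hE1 : ∀ ξ x : V N, ‖Ek ξ x‖ ≤ 1)
    {c : ℝ} (hc : 0 < c) (z : V N)
    (h0 : (∫ ξ, Real.exp (-(2*c) * ‖ξ‖ ^ 2) * ‖Ek ξ z‖ ^ 2 ∂(dw R k)) = 0) :
    ∀ x, heat R k Ek c x z = 0 := by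
  intro x
  have hcont2 : Continuous fun ξ : V N => Real.exp (-(2*c) * ‖ξ‖ ^ 2) * ‖Ek ξ z‖ ^ 2 :=
    (Real.continuous_exp.comp (continuous_const.mul (continuous_norm.pow 2))).mul
      ((continuous_norm.comp (hEcont z)).pow 2)
  have hint2 : Integrable (fun ξ : V N => Real.exp (-(2*c) * ‖ξ‖ ^ 2) * ‖Ek ξ z‖ ^ 2)
      (dw R k) := by
    refine (dw_integrable_gauss R k hk0 hR2 (c := 2*c) (by positivity)).mono'
      hcont2.aestronglyMeasurable (Filter.Eventually.of_forall fun ξ => ?_)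
    rw [Real.norm_eq_abs, _root_.abs_of_nonneg (by positivity)]
    have h1 : ‖Ek ξ z‖ ^ 2 ≤ 1 := by nlinarith [hE1 ξ z, norm_nonneg (Ek ξ z)]
    calc Real.exp (-(2*c) * ‖ξ‖ ^ 2) * ‖Ek ξ z‖ ^ 2
        ≤ Real.exp (-(2*c) * ‖ξ‖ ^ 2) * 1 :=
          mul_le_mul_of_nonneg_left h1 (Real.exp_pos _).le
      _ = Real.exp (-(2*c) * ‖ξ‖ ^ 2) := mul_one _
  have hae := (integral_eq_zero_iff_of_nonneg_ae
    (Filter.Eventually.of_forall fun ξ => by positivity) hint2).mp h0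
  rw [heat]
  have hz : ∀ᵐ ξ ∂(dw R k),
      ((Real.exp (-c * ‖ξ‖ ^ 2) : ℝ) : ℂ) * Ek ξ x * (starRingEnd ℂ) (Ek ξ z) = 0 := by
    filter_upwards [hae] with ξ hξ
    simp only [Pi.zero_apply] at hξ
    rcases mul_eq_zero.mp hξ with h | h
    · exact absurd h (Real.exp_ne_zero _)
    · have hz0 : Ek ξ z = 0 := by
        rw [pow_eq_zero_iff (two_ne_zero)] at h
        exact norm_eq_zero.mp h
      simp [hz0]
  rw [integral_congr_ae hz, integral_zero, mul_zero]

lemma heat_sq_integrable (R : Finset (V N)) (k : V N → ℝ) (hk0 : ∀ α ∈ R, 0 ≤ k α)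
    (hR2 : ∀ α ∈ R, ‖α‖ ^ 2 = 2) (Ek : V N → V N → ℂ)
    (hEcont : ∀ x : V N, Continuous fun ξ => Ek ξ x) (hE1 : ∀ ξ x : V N, ‖Ek ξ x‖ ≤ 1)
    (hPlanch : ∀ m : V N → ℂ, Integrable m (dw R k) → MemLp m 2 (dw R k) →
      (∫ x, ‖((ck R k : ℝ) : ℂ)⁻¹ * ∫ ξ, m ξ * Ek ξ x ∂(dw R k)‖ ^ 2 ∂(dw R k)) =
        ∫ ξ, ‖m ξ‖ ^ 2 ∂(dw R k))
    {c : ℝ} (hc : 0 < c) (z : V N) :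
    Integrable (fun x => ‖heat R k Ek c x z‖ ^ 2) (dw R k) := by
  by_contra hni
  have h1 := planch_diag R k hk0 hR2 Ek hEcont hE1 hPlanch hc z
  rw [integral_undef hni] at h1
  have h2 := heat_vanish R k hk0 hR2 Ek hEcont hE1 hc z h1.symm
  apply hni
  have hzero : (fun x => ‖heat R k Ek c x z‖ ^ 2) = fun _ => (0:ℝ) :=
    funext fun x => by rw [h2 x]; simp
  rw [hzero]
  exact integrable_zero _ _ _

end Helpers

section Helpers2
variable {N : ℕ}

lemma integral_mono_generic {μ : Measure (V N)} (F P Q : V N → ℝ) (c : ℝ) (hc : 0 ≤ c)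
    (hP : Integrable P μ) (hQ : Integrable Q μ)
    (hPn : ∀ x, 0 ≤ P x) (hQn : ∀ x, 0 ≤ Q x)
    (hpt : ∀ x, F x ≤ c * (P x + Q x)) :
    (∫ x, F x ∂μ) ≤ c * ((∫ x, P x ∂μ) + ∫ x, Q x ∂μ) := by
  by_cases hF : Integrable F μ
  · calc (∫ x, F x ∂μ) ≤ ∫ x, c * (P x + Q x) ∂μ :=
        integral_mono hF ((hP.add hQ).const_mul _) hpt
      _ = c * ((∫ x, P x ∂μ) + ∫ x, Q x ∂μ) := by
        rw [integral_const_mul, integral_add hP hQ]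
  · rw [integral_undef hF]
    exact mul_nonneg hc (add_nonneg (integral_nonneg hPn) (integral_nonneg hQn))

lemma ball_le (R : Finset (V N)) (k : V N → ℝ) (hk0 : ∀ α ∈ R, 0 ≤ k α)
    (hR2 : ∀ α ∈ R, ‖α‖ ^ 2 = 2) (Ek : V N → V N → ℂ)
    (hEcont : ∀ x : V N, Continuous fun ξ => Ek ξ x) (hE1 : ∀ ξ x : V N, ‖Ek ξ x‖ ≤ 1)
    {t : ℝ} (ht : 0 < t) (y y' : V N) :
    (∫ ξ in closedBall (0 : V N) (1/t), ‖Ek ξ y - Ek ξ y'‖ ^ 2 ∂(dw R k)) ≤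
      Real.exp 2⁻¹ *
        ∫ ξ, Real.exp (-(2*(t^2/4)) * ‖ξ‖ ^ 2) * ‖Ek ξ y - Ek ξ y'‖ ^ 2 ∂(dw R k) := by
  set s : ℝ := t ^ 2 / 4 with hs
  have hs0 : 0 < s := by positivity
  have hΔcont : Continuous fun ξ => Ek ξ y - Ek ξ y' := (hEcont y).sub (hEcont y')
  have hΔb : ∀ ξ, ‖Ek ξ y - Ek ξ y'‖ ≤ 2 := fun ξ =>
    (norm_sub_le _ _).trans (by linarith [hE1 ξ y, hE1 ξ y'])
  set iS : V N → ℝ := fun ξ => Real.exp (-(2*s) * ‖ξ‖ ^ 2) * ‖Ek ξ y - Ek ξ y'‖ ^ 2 with hiS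
  have hiScont : Continuous iS :=
    (Real.continuous_exp.comp (continuous_const.mul (continuous_norm.pow 2))).mul
      ((continuous_norm.comp hΔcont).pow 2)
  have hiSnn : ∀ ξ, 0 ≤ iS ξ := fun ξ => by positivity
  have hiSint : Integrable iS (dw R k) := by
    refine ((dw_integrable_gauss R k hk0 hR2 (c := 2*s) (by positivity)).const_mul 4).mono'
      hiScont.aestronglyMeasurable (Filter.Eventually.of_forall fun ξ => ?_)
    rw [Real.norm_eq_abs, _root_.abs_of_nonneg (hiSnn ξ)]
    have := hΔb ξ
    have h1 : ‖Ek ξ y - Ek ξ y'‖ ^ 2 ≤ 4 := by nlinarith [norm_nonneg (Ek ξ y - Ek ξ y')]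
    calc iS ξ ≤ Real.exp (-(2*s) * ‖ξ‖ ^ 2) * 4 :=
          mul_le_mul_of_nonneg_left h1 (Real.exp_pos _).le
      _ = 4 * Real.exp (-(2*s) * ‖ξ‖ ^ 2) := by ring
  have hball : ∀ ξ ∈ closedBall (0 : V N) (1/t),
      ‖Ek ξ y - Ek ξ y'‖ ^ 2 ≤ Real.exp 2⁻¹ * iS ξ := by
    intro ξ hξ
    rw [mem_closedBall, dist_zero_right] at hξ
    have hξ2 : ‖ξ‖ ^ 2 ≤ (1/t) ^ 2 := pow_le_pow_left₀ (norm_nonneg ξ) hξ 2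
    have h1 : 2 * s * ‖ξ‖ ^ 2 ≤ 2⁻¹ := by
      have ht2 : (0:ℝ) < t ^ 2 := by positivity
      have he : 2 * s * (1/t) ^ 2 = 2⁻¹ := by
        rw [hs]; field_simp; ring
      nlinarith [sq_nonneg ‖ξ‖]
    have h2 : (1:ℝ) ≤ Real.exp 2⁻¹ * Real.exp (-(2*s) * ‖ξ‖ ^ 2) := by
      rw [← Real.exp_add]
      refine Real.one_le_exp ?_
      linarith
    calc ‖Ek ξ y - Ek ξ y'‖ ^ 2 = 1 * ‖Ek ξ y - Ek ξ y'‖ ^ 2 := (one_mul _).symm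
      _ ≤ (Real.exp 2⁻¹ * Real.exp (-(2*s) * ‖ξ‖ ^ 2)) * ‖Ek ξ y - Ek ξ y'‖ ^ 2 :=
          mul_le_mul_of_nonneg_right h2 (by positivity)
      _ = Real.exp 2⁻¹ * iS ξ := by rw [hiS]; ring
  have hIB : IntegrableOn (fun ξ => ‖Ek ξ y - Ek ξ y'‖ ^ 2) (closedBall (0 : V N) (1/t))
      (dw R k) := by
    refine ((hiSint.const_mul (Real.exp 2⁻¹)).restrict).mono'
      ((continuous_norm.comp hΔcont).pow 2).aestronglyMeasurable.restrict ?_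
    filter_upwards [ae_restrict_mem measurableSet_closedBall] with ξ hξ
    rw [Real.norm_eq_abs, _root_.abs_of_nonneg (by positivity)]
    exact hball ξ hξ
  calc (∫ ξ in closedBall (0 : V N) (1/t), ‖Ek ξ y - Ek ξ y'‖ ^ 2 ∂(dw R k))
      ≤ ∫ ξ in closedBall (0 : V N) (1/t), Real.exp 2⁻¹ * iS ξ ∂(dw R k) :=
        setIntegral_mono_on hIB ((hiSint.const_mul _).restrict) measurableSet_closedBall hball
    _ ≤ ∫ ξ, Real.exp 2⁻¹ * iS ξ ∂(dw R k) :=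
        setIntegral_le_integral (hiSint.const_mul _)
          (Filter.Eventually.of_forall fun ξ => by positivity)
    _ = Real.exp 2⁻¹ * ∫ ξ, iS ξ ∂(dw R k) := integral_const_mul _ _

end Helpers2

set_option maxHeartbeats 1000000 in
/-- the Hölder `L²` estimate for differences of the Dunkl kernel
over balls `B(0,1/t)`. -/
theorem statement3 (N : ℕ) (R : Finset (V N)) (k : V N → ℝ)
    (hR : IsNRS R) (hk : ∀ α ∈ R, 0 < k α)
    (hkG : ∀ α ∈ R, ∀ β ∈ R, k (sigma' α β) = k β)
    (Ek : V N → V N → ℂ)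
    (hEsm : ∀ x : V N, ContDiff ℝ (⊤ : ℕ∞) fun ξ => Ek ξ x)
    (hEb : ∀ (x : V N) (β : Fin N → ℕ) (ξ : V N),
      ‖pdM β (fun ξ' => Ek ξ' x) ξ‖ ≤ ‖x‖ ^ (∑ j, β j))
    (hEconj : ∀ ξ x : V N, Ek (-ξ) x = (starRingEnd ℂ) (Ek ξ x))
    (ε₁ : ℝ) (hε : 0 < ε₁ ∧ ε₁ ≤ 1)
    (C_h : ℝ) (hCh : 0 < C_h)
    (hheat : ∀ s : ℝ, 0 < s → ∀ y : V N,
      ‖heat R k Ek s y y‖ ≤ C_h / wB R k y (Real.sqrt s))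
    (hPlanch : ∀ m : V N → ℂ, Integrable m (dw R k) → MemLp m 2 (dw R k) →
      (∫ x, ‖((ck R k : ℝ) : ℂ)⁻¹ * ∫ ξ, m ξ * Ek ξ x ∂(dw R k)‖ ^ 2 ∂(dw R k)) =
        ∫ ξ, ‖m ξ‖ ^ 2 ∂(dw R k))
    (C_r : ℝ) (hCr : 0 < C_r)
    (hreg : ∀ s : ℝ, 0 < s → ∀ x y y' : V N,
      ‖heat R k Ek s x y - heat R k Ek s x y'‖ ≤
        C_r * (‖y - y'‖ / Real.sqrt s) ^ ε₁ *
          (‖heat R k Ek (2 * s) x y‖ + ‖heat R k Ek (2 * s) x y'‖)) :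
    ∃ C > (0 : ℝ), ∀ t : ℝ, 0 < t → ∀ y y' : V N,
      Real.sqrt (∫ ξ in closedBall (0 : V N) (1 / t), ‖Ek ξ y - Ek ξ y'‖ ^ 2 ∂(dw R k)) ≤
        C * (‖y - y'‖ / t) ^ ε₁ *
          (wB R k y t ^ (-(1 / 2 : ℝ)) + wB R k y' t ^ (-(1 / 2 : ℝ))) := by
  obtain ⟨hε1, hε2⟩ := hε
  have hk0 : ∀ α ∈ R, 0 ≤ k α := fun α hα => (hk α hα).le
  have hck : 0 < ck R k := ck_pos R k hR hk0
  have hEcont : ∀ x : V N, Continuous fun ξ => Ek ξ x := fun x => (hEsm x).continuous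
  have hE1 : ∀ ξ x : V N, ‖Ek ξ x‖ ≤ 1 := by
    intro ξ x
    have h := hEb x (fun _ => 0) ξ
    rw [pdM_zero_eq] at h
    simpa using h
  refine ⟨1 + C_r * Real.sqrt (8 * Real.exp 2⁻¹ * ck R k * C_h), by positivity, ?_⟩
  intro t ht y y'
  set s : ℝ := t ^ 2 / 4 with hs
  have hs0 : 0 < s := by positivity
  have hs20 : (0:ℝ) < 2 * s := by positivity
  have step1 : (∫ ξ in closedBall (0 : V N) (1/t), ‖Ek ξ y - Ek ξ y'‖ ^ 2 ∂(dw R k)) ≤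
      Real.exp 2⁻¹ *
        ∫ ξ, Real.exp (-(2*s) * ‖ξ‖ ^ 2) * ‖Ek ξ y - Ek ξ y'‖ ^ 2 ∂(dw R k) :=
    ball_le R k hk0 hR.normSq Ek hEcont hE1 ht y y'
  have step2 : (∫ ξ, Real.exp (-(2*s) * ‖ξ‖ ^ 2) * ‖Ek ξ y - Ek ξ y'‖ ^ 2 ∂(dw R k)) =
      ∫ x, ‖heat R k Ek s x y - heat R k Ek s x y'‖ ^ 2 ∂(dw R k) :=
    (planch_diff R k hk0 hR.normSq Ek hEcont hE1 hPlanch hs0 y y').symm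
  set u : ℝ := (‖y - y'‖ / Real.sqrt s) ^ ε₁ with hu
  have hu0 : 0 ≤ u := Real.rpow_nonneg (by positivity) _
  have hPint : ∀ z : V N, Integrable (fun x => ‖heat R k Ek (2*s) x z‖ ^ 2) (dw R k) :=
    fun z => heat_sq_integrable R k hk0 hR.normSq Ek hEcont hE1 hPlanch hs20 z
  have step3 : (∫ x, ‖heat R k Ek s x y - heat R k Ek s x y'‖ ^ 2 ∂(dw R k)) ≤
      2 * (C_r * u) ^ 2 * ((∫ x, ‖heat R k Ek (2*s) x y‖ ^ 2 ∂(dw R k)) +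
        ∫ x, ‖heat R k Ek (2*s) x y'‖ ^ 2 ∂(dw R k)) := by
    refine integral_mono_generic _ _ _ _ (by positivity) (hPint y) (hPint y')
      (fun x => by positivity) (fun x => by positivity) ?_
    intro x
    have h := hreg s hs0 x y y'
    rw [← hu] at h
    have ha := norm_nonneg (heat R k Ek (2*s) x y)
    have hb := norm_nonneg (heat R k Ek (2*s) x y')
    have hd := norm_nonneg (heat R k Ek s x y - heat R k Ek s x y')
    have hCu : 0 ≤ C_r * u := by positivity
    nlinarith [sq_nonneg (‖heat R k Ek (2*s) x y‖ - ‖heat R k Ek (2*s) x y'‖),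
      sq_nonneg (C_r * u), mul_le_mul_of_nonneg_left h hCu]
  have hwB : ∀ z : V N, (∫ x, ‖heat R k Ek (2*s) x z‖ ^ 2 ∂(dw R k)) ≤
      ck R k * C_h * (wB R k z t ^ (-(1/2 : ℝ))) ^ 2 := by
    intro z
    rw [planch_diag R k hk0 hR.normSq Ek hEcont hE1 hPlanch hs20 z,
      heat_diag R k hck Ek hs20 z]
    have h4s : 2*(2*s) = t ^ 2 := by rw [hs]; ring
    have hsq : Real.sqrt (2*(2*s)) = t := by rw [h4s, Real.sqrt_sq ht.le]
    have hh := hheat (2*(2*s)) (by positivity) z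
    rw [hsq] at hh
    have hwb0 : 0 ≤ wB R k z t := ENNReal.toReal_nonneg
    have hpow : (wB R k z t ^ (-(1/2 : ℝ))) ^ 2 = (wB R k z t)⁻¹ := by
      rw [← Real.rpow_natCast (wB R k z t ^ (-(1/2 : ℝ))) 2, ← Real.rpow_mul hwb0]
      norm_num
      exact Real.rpow_neg_one _
    calc ck R k * ‖heat R k Ek (2*(2*s)) z z‖ ≤ ck R k * (C_h / wB R k z t) :=
          mul_le_mul_of_nonneg_left hh hck.le
      _ = ck R k * C_h * (wB R k z t ^ (-(1/2 : ℝ))) ^ 2 := by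
          rw [hpow, div_eq_mul_inv]; ring
  have hsqrt_s : Real.sqrt s = t/2 := by
    rw [hs, show t ^ 2 / 4 = (t/2) ^ 2 by ring, Real.sqrt_sq (by positivity)]
  set v : ℝ := (‖y - y'‖ / t) ^ ε₁ with hv
  have hv0 : 0 ≤ v := Real.rpow_nonneg (by positivity) _
  have hu2 : u ≤ 2 * v := by
    rw [hu, hv, hsqrt_s]
    rw [show ‖y - y'‖ / (t/2) = 2 * (‖y - y'‖ / t) by field_simp]
    rw [Real.mul_rpow (by norm_num) (by positivity)]
    have h2e : (2:ℝ) ^ ε₁ ≤ 2 := by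
      calc (2:ℝ) ^ ε₁ ≤ (2:ℝ) ^ (1:ℝ) := Real.rpow_le_rpow_of_exponent_le one_le_two hε2
        _ = 2 := Real.rpow_one 2
    exact mul_le_mul_of_nonneg_right h2e (Real.rpow_nonneg (by positivity) _)
  set a : ℝ := wB R k y t ^ (-(1/2 : ℝ)) with hadef
  set b : ℝ := wB R k y' t ^ (-(1/2 : ℝ)) with hbdef
  have ha0 : 0 ≤ a := Real.rpow_nonneg ENNReal.toReal_nonneg _
  have hb0 : 0 ≤ b := Real.rpow_nonneg ENNReal.toReal_nonneg _
  have hchain : (∫ ξ in closedBall (0 : V N) (1/t), ‖Ek ξ y - Ek ξ y'‖ ^ 2 ∂(dw R k)) ≤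
      (C_r * Real.sqrt (8 * Real.exp 2⁻¹ * ck R k * C_h) * v * (a + b)) ^ 2 := by
    have hcksq : Real.sqrt (8 * Real.exp 2⁻¹ * ck R k * C_h) ^ 2 =
        8 * Real.exp 2⁻¹ * ck R k * C_h := Real.sq_sqrt (by positivity)
    have hu2sq : (C_r * u) ^ 2 ≤ C_r ^ 2 * (4 * v ^ 2) := by
      have h1 : C_r * u ≤ C_r * (2 * v) := mul_le_mul_of_nonneg_left hu2 hCr.le
      nlinarith [mul_nonneg hCr.le hu0]
    have hab : a ^ 2 + b ^ 2 ≤ (a + b) ^ 2 := by nlinarith [mul_nonneg ha0 hb0]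
    have hS2 : (∫ x, ‖heat R k Ek s x y - heat R k Ek s x y'‖ ^ 2 ∂(dw R k)) ≤
        2 * (C_r * u) ^ 2 * (ck R k * C_h * a ^ 2 + ck R k * C_h * b ^ 2) := by
      refine le_trans step3 ?_
      have h2 : 0 ≤ 2 * (C_r * u) ^ 2 := by positivity
      nlinarith [hwB y, hwB y']
    calc (∫ ξ in closedBall (0 : V N) (1/t), ‖Ek ξ y - Ek ξ y'‖ ^ 2 ∂(dw R k))
        ≤ Real.exp 2⁻¹ *
            ∫ ξ, Real.exp (-(2*s) * ‖ξ‖ ^ 2) * ‖Ek ξ y - Ek ξ y'‖ ^ 2 ∂(dw R k) := step1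
      _ = Real.exp 2⁻¹ * ∫ x, ‖heat R k Ek s x y - heat R k Ek s x y'‖ ^ 2 ∂(dw R k) := by
          rw [step2]
      _ ≤ Real.exp 2⁻¹ * (2 * (C_r * u) ^ 2 *
            (ck R k * C_h * a ^ 2 + ck R k * C_h * b ^ 2)) :=
          mul_le_mul_of_nonneg_left hS2 (Real.exp_pos _).le
      _ ≤ (C_r * Real.sqrt (8 * Real.exp 2⁻¹ * ck R k * C_h) * v * (a + b)) ^ 2 := by
          have hckCh : 0 ≤ ck R k * C_h := mul_nonneg hck.le hCh.le
          have h3 : 0 ≤ (C_r * u) ^ 2 := sq_nonneg _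
          have h4 : 0 ≤ 2 * Real.exp 2⁻¹ * (ck R k * C_h) :=
            mul_nonneg (by positivity) hckCh
          calc Real.exp 2⁻¹ * (2 * (C_r * u) ^ 2 *
                (ck R k * C_h * a ^ 2 + ck R k * C_h * b ^ 2))
              = 2 * Real.exp 2⁻¹ * (ck R k * C_h) * ((C_r * u) ^ 2 * (a ^ 2 + b ^ 2)) := by
                ring
            _ ≤ 2 * Real.exp 2⁻¹ * (ck R k * C_h) * ((C_r * u) ^ 2 * (a + b) ^ 2) :=
                mul_le_mul_of_nonneg_left (mul_le_mul_of_nonneg_left hab h3) h4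
            _ ≤ 2 * Real.exp 2⁻¹ * (ck R k * C_h) * ((C_r ^ 2 * (4 * v ^ 2)) * (a + b) ^ 2) :=
                mul_le_mul_of_nonneg_left
                  (mul_le_mul_of_nonneg_right hu2sq (sq_nonneg _)) h4
            _ = (C_r * Real.sqrt (8 * Real.exp 2⁻¹ * ck R k * C_h) * v * (a + b)) ^ 2 := by
                rw [show (C_r * Real.sqrt (8 * Real.exp 2⁻¹ * ck R k * C_h) * v * (a + b)) ^ 2
                    = C_r ^ 2 * (Real.sqrt (8 * Real.exp 2⁻¹ * ck R k * C_h) ^ 2) * v ^ 2 *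
                      (a + b) ^ 2 by ring, hcksq]
                ring
  have hrhs0 : 0 ≤ C_r * Real.sqrt (8 * Real.exp 2⁻¹ * ck R k * C_h) * v * (a + b) := by
    positivity
  have hfin : Real.sqrt (∫ ξ in closedBall (0 : V N) (1/t),
      ‖Ek ξ y - Ek ξ y'‖ ^ 2 ∂(dw R k)) ≤
      C_r * Real.sqrt (8 * Real.exp 2⁻¹ * ck R k * C_h) * v * (a + b) := by
    calc Real.sqrt (∫ ξ in closedBall (0 : V N) (1/t), ‖Ek ξ y - Ek ξ y'‖ ^ 2 ∂(dw R k))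
        ≤ Real.sqrt ((C_r * Real.sqrt (8 * Real.exp 2⁻¹ * ck R k * C_h) * v * (a + b)) ^ 2) :=
          Real.sqrt_le_sqrt hchain
      _ = C_r * Real.sqrt (8 * Real.exp 2⁻¹ * ck R k * C_h) * v * (a + b) :=
          Real.sqrt_sq hrhs0
  refine hfin.trans ?_
  have h1 : C_r * Real.sqrt (8 * Real.exp 2⁻¹ * ck R k * C_h) ≤
      1 + C_r * Real.sqrt (8 * Real.exp 2⁻¹ * ck R k * C_h) := by linarith
  have h2 : 0 ≤ v * (a + b) := mul_nonneg hv0 (add_nonneg ha0 hb0)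
  calc C_r * Real.sqrt (8 * Real.exp 2⁻¹ * ck R k * C_h) * v * (a + b)
      = (C_r * Real.sqrt (8 * Real.exp 2⁻¹ * ck R k * C_h)) * (v * (a + b)) := by ring
    _ ≤ (1 + C_r * Real.sqrt (8 * Real.exp 2⁻¹ * ck R k * C_h)) * (v * (a + b)) :=
        mul_le_mul_of_nonneg_right h1 h2
    _ = (1 + C_r * Real.sqrt (8 * Real.exp 2⁻¹ * ck R k * C_h)) * v * (a + b) := by ring
end
end

section
/- Let m ≥ |G|² + 1 and let {σ_j}_{j=0}^{m} be any sequence of elements of G with σ₀ = id and σ_{j+1} = g_{j+1} ∘ σ_j for 0 ≤ j ≤ m−1, where each g_{j+1} ∈ {id} ∪ {σ_α : α ∈ R}. Then for all x, y ∈ ℝ^N there is a finite sequence 𝛂 of elements of R which is admissible for (x,y) with ℓ(𝛂) ≤ |G|, such that for all t > 0: ∏_{j=0}^{m} (1 + ‖x − σ_j(y)‖/√t)^{−2} ≤ ρ_𝛂(x,y,t) ≤ Λ(x,y,t). -/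
open MeasureTheory Metric Complex
open scoped BigOperators ENNReal RealInnerProductSpace

noncomputable section

variable {N : ℕ}

variable {R : Finset (V N)}



lemma sigma'_eq (hR : IsNRS R) {α : V N} (hα : α ∈ R) (x : V N) :
    sigma' α x = x - ⟪x, α⟫ • α := by
  unfold sigma'
  rw [hR.normSq α hα]
  norm_num

lemma neg_mem (hR : IsNRS R) {α : V N} (hα : α ∈ R) : -α ∈ R := by
  have h := hR.reflMem α hα α hα
  rwa [sigma'_eq hR hα, real_inner_self_eq_norm_sq, hR.normSq α hα, two_smul,
    sub_add_eq_sub_sub, sub_sub_cancel_left] at h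

lemma inner_sigma' (hR : IsNRS R) {α : V N} (hα : α ∈ R) (x y : V N) :
    ⟪sigma' α x, sigma' α y⟫ = ⟪x, y⟫ := by
  rw [sigma'_eq hR hα, sigma'_eq hR hα]
  have h2 : ⟪α, α⟫ = 2 := by
    rw [real_inner_self_eq_norm_sq, hR.normSq α hα]
  rw [inner_sub_left, inner_sub_right, inner_sub_right, real_inner_smul_left,
    real_inner_smul_left, real_inner_smul_right, real_inner_smul_right, h2,
    real_inner_comm y α]
  ring

lemma sigma'_invol (hR : IsNRS R) {α : V N} (hα : α ∈ R) (x : V N) :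
    sigma' α (sigma' α x) = x := by
  have h2 : ⟪α, α⟫ = 2 := by
    rw [real_inner_self_eq_norm_sq, hR.normSq α hα]
  rw [sigma'_eq hR hα, sigma'_eq hR hα, inner_sub_left, real_inner_smul_left, h2]
  module

lemma sigma'_linear (hR : IsNRS R) {α : V N} (hα : α ∈ R) :
    IsLinearMap ℝ (sigma' α : V N → V N) := by
  constructor
  · intro x y
    rw [sigma'_eq hR hα, sigma'_eq hR hα, sigma'_eq hR hα, inner_add_left]
    module
  · intro c x
    rw [sigma'_eq hR hα, sigma'_eq hR hα, real_inner_smul_left]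
    module

lemma dist_sq_sigma' (hR : IsNRS R) {α : V N} (hα : α ∈ R) (x z : V N) :
    ‖x - sigma' α z‖ ^ 2 = ‖x - z‖ ^ 2 + 2 * (⟪x, α⟫ * ⟪z, α⟫) := by
  have h2 : ⟪α, α⟫ = 2 := by
    rw [real_inner_self_eq_norm_sq, hR.normSq α hα]
  have e : x - sigma' α z = (x - z) + ⟪z, α⟫ • α := by
    rw [sigma'_eq hR hα]; abel
  rw [e, ← real_inner_self_eq_norm_sq, ← real_inner_self_eq_norm_sq]
  simp only [inner_add_left, inner_add_right, inner_sub_left, inner_sub_right,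
    real_inner_smul_left, real_inner_smul_right, h2]
  rw [real_inner_comm z x, real_inner_comm α x, real_inner_comm α z]
  ring

lemma norm_le_of_sq_le {a b : ℝ} (ha : 0 ≤ a) (hb : 0 ≤ b) (h : a ^ 2 ≤ b ^ 2) : a ≤ b := by
  nlinarith





def wordF (l : List (V N)) : V N → V N := l.foldr (fun α h => sigma' α ∘ h) id

lemma foldr_eq_wordF (l : List (V N)) : l.foldr (fun α h => sigma' α ∘ h) id = wordF l := rfl

lemma wordF_nil : wordF ([] : List (V N)) = id := rfl

lemma wordF_cons (a : V N) (l : List (V N)) : wordF (a :: l) = sigma' a ∘ wordF l := rfl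

lemma wordF_append (l₁ l₂ : List (V N)) : wordF (l₁ ++ l₂) = wordF l₁ ∘ wordF l₂ := by
  induction l₁ with
  | nil => rfl
  | cons a t ih => rw [List.cons_append, wordF_cons, wordF_cons, ih]; rfl

lemma mem_Gset_iff {g : V N → V N} :
    g ∈ Gset R ↔ ∃ l : List (V N), (∀ α ∈ l, α ∈ R) ∧ g = wordF l := Iff.rfl

lemma id_mem_Gset : (id : V N → V N) ∈ Gset R := ⟨[], by simp, rfl⟩

lemma wordF_mem_Gset {l : List (V N)} (hl : ∀ α ∈ l, α ∈ R) : wordF l ∈ Gset R := ⟨l, hl, rfl⟩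

lemma comp_mem_Gset {g h : V N → V N} (hg : g ∈ Gset R) (hh : h ∈ Gset R) :
    g ∘ h ∈ Gset R := by
  obtain ⟨l₁, h₁, rfl⟩ := hg
  obtain ⟨l₂, h₂, rfl⟩ := hh
  rw [foldr_eq_wordF, foldr_eq_wordF, ← wordF_append]
  refine wordF_mem_Gset ?_
  intro a ha
  rcases List.mem_append.1 ha with h | h
  exacts [h₁ a h, h₂ a h]

lemma sigmaL_nil (y : V N) : sigmaL ([] : List (V N)) y = y := rfl

lemma sigmaL_cons (a : V N) (t : List (V N)) (y : V N) :
    sigmaL (a :: t) y = sigmaL t (sigma' a y) := rfl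

lemma sigmaL_append (l₁ l₂ : List (V N)) (y : V N) :
    sigmaL (l₁ ++ l₂) y = sigmaL l₂ (sigmaL l₁ y) := List.foldl_append ..

lemma sigmaL_eq_wordF (l : List (V N)) (y : V N) : sigmaL l y = wordF l.reverse y := by
  induction l generalizing y with
  | nil => rfl
  | cons a t ih =>
    rw [List.reverse_cons, wordF_append, sigmaL_cons, ih]
    rfl

lemma sigmaL_mem_Gset {l : List (V N)} (hl : ∀ α ∈ l, α ∈ R) :
    (fun y => sigmaL l y) ∈ Gset R := by
  have : (fun y => sigmaL l y) = wordF l.reverse := by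
    funext y; exact sigmaL_eq_wordF l y
  rw [this]
  exact wordF_mem_Gset (by intro a ha; exact hl a (List.mem_reverse.1 ha))

lemma wordF_lin (hR : IsNRS R) {l : List (V N)} (hl : ∀ α ∈ l, α ∈ R) :
    IsLinearMap ℝ (wordF l) := by
  induction l with
  | nil => exact ⟨fun x y => rfl, fun c x => rfl⟩
  | cons a t ih =>
    have ha := hl a (List.mem_cons_self)
    have ih' := ih (fun α hα => hl α (List.mem_cons_of_mem a hα))
    rw [wordF_cons]
    exact ⟨fun x y => by
      simp only [Function.comp_apply, ih'.map_add, (sigma'_linear hR ha).map_add],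
      fun c x => by
      simp only [Function.comp_apply, ih'.map_smul, (sigma'_linear hR ha).map_smul]⟩

lemma wordF_inner (hR : IsNRS R) {l : List (V N)} (hl : ∀ α ∈ l, α ∈ R) (x y : V N) :
    ⟪wordF l x, wordF l y⟫ = ⟪x, y⟫ := by
  induction l generalizing x y with
  | nil => rfl
  | cons a t ih =>
    have ha := hl a (List.mem_cons_self)
    rw [wordF_cons]
    simp only [Function.comp_apply]
    rw [inner_sigma' hR ha, ih (fun α hα => hl α (List.mem_cons_of_mem a hα))]

lemma wordF_maps (hR : IsNRS R) {l : List (V N)} (hl : ∀ α ∈ l, α ∈ R) {β : V N} (hβ : β ∈ R) :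
    wordF l β ∈ R := by
  induction l with
  | nil => exact hβ
  | cons a t ih =>
    have ha := hl a (List.mem_cons_self)
    rw [wordF_cons]
    exact hR.reflMem a ha _ (ih (fun α hα => hl α (List.mem_cons_of_mem a hα)))

lemma gset_lin (hR : IsNRS R) {g : V N → V N} (hg : g ∈ Gset R) : IsLinearMap ℝ g := by
  obtain ⟨l, hl, rfl⟩ := hg
  rw [foldr_eq_wordF]
  exact wordF_lin hR hl

lemma gset_inner (hR : IsNRS R) {g : V N → V N} (hg : g ∈ Gset R) (x y : V N) :
    ⟪g x, g y⟫ = ⟪x, y⟫ := by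
  obtain ⟨l, hl, rfl⟩ := hg
  rw [foldr_eq_wordF]
  exact wordF_inner hR hl x y

lemma gset_maps (hR : IsNRS R) {g : V N → V N} (hg : g ∈ Gset R) {β : V N} (hβ : β ∈ R) :
    g β ∈ R := by
  obtain ⟨l, hl, rfl⟩ := hg
  rw [foldr_eq_wordF]
  exact wordF_maps hR hl hβ

lemma wordF_reverse_comp (hR : IsNRS R) {l : List (V N)} (hl : ∀ α ∈ l, α ∈ R) (y : V N) :
    wordF l (wordF l.reverse y) = y := by
  induction l generalizing y with
  | nil => rfl
  | cons a t ih =>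
    have ha := hl a (List.mem_cons_self)
    have ih' := fun z => ih (fun α hα => hl α (List.mem_cons_of_mem a hα)) z
    rw [List.reverse_cons, wordF_append, wordF_cons]
    simp only [Function.comp_apply]
    have h1 : wordF [a] y = sigma' a y := rfl
    rw [h1, ih' (sigma' a y), sigma'_invol hR ha]

lemma wordF_comp_reverse (hR : IsNRS R) {l : List (V N)} (hl : ∀ α ∈ l, α ∈ R) (y : V N) :
    wordF l.reverse (wordF l y) = y := by
  have h := wordF_reverse_comp hR (l := l.reverse)
    (by intro a ha; exact hl a (List.mem_reverse.1 ha)) y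
  rwa [List.reverse_reverse] at h

lemma gset_inv (hR : IsNRS R) {g : V N → V N} (hg : g ∈ Gset R) :
    ∃ g' ∈ Gset R, (∀ y, g (g' y) = y) ∧ (∀ y, g' (g y) = y) := by
  obtain ⟨l, hl, rfl⟩ := hg
  rw [foldr_eq_wordF]
  exact ⟨wordF l.reverse, wordF_mem_Gset (by intro a ha; exact hl a (List.mem_reverse.1 ha)),
    wordF_reverse_comp hR hl, wordF_comp_reverse hR hl⟩

lemma gset_fix (hR : IsNRS R) {g : V N → V N} (hg : g ∈ Gset R) {b : V N}
    (hb : ∀ α ∈ R, ⟪b, α⟫ = 0) : g b = b := by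
  obtain ⟨l, hl, rfl⟩ := hg
  rw [foldr_eq_wordF]
  induction l with
  | nil => rfl
  | cons a t ih =>
    have ha := hl a (List.mem_cons_self)
    rw [wordF_cons]
    simp only [Function.comp_apply, ih (fun α hα => hl α (List.mem_cons_of_mem a hα))]
    rw [sigma'_eq hR ha, hb a ha]
    simp

lemma gset_norm (hR : IsNRS R) {g : V N → V N} (hg : g ∈ Gset R) (x y : V N) :
    ‖g x - g y‖ = ‖x - y‖ := by
  have hlin := gset_lin hR hg
  have h0 : g x - g y = g (x - y) := by
    rw [sub_eq_add_neg, sub_eq_add_neg, ← hlin.map_neg, ← hlin.map_add]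
  rw [h0]
  have h := gset_inner hR hg (x - y) (x - y)
  rw [real_inner_self_eq_norm_sq, real_inner_self_eq_norm_sq] at h
  nlinarith [norm_nonneg (g (x-y)), norm_nonneg (x-y)]





lemma gset_ext (hR : IsNRS R) {g₁ g₂ : V N → V N} (h₁ : g₁ ∈ Gset R) (h₂ : g₂ ∈ Gset R)
    (h : ∀ β ∈ R, g₁ β = g₂ β) : g₁ = g₂ := by
  classical
  funext x
  -- decompose x into span R part and orthogonal part
  set S : Submodule ℝ (V N) := Submodule.span ℝ (R : Set (V N)) with hS
  have hcs : CompleteSpace S := by infer_instance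
  obtain ⟨a, ha, b, hb, rfl⟩ := Submodule.exists_add_mem_mem_orthogonal (K := S) x
  have hlin₁ := gset_lin hR h₁
  have hlin₂ := gset_lin hR h₂
  have hb' : ∀ α ∈ R, ⟪b, α⟫ = 0 := by
    intro α hα
    have := hb (α : V N) (Submodule.subset_span hα)
    rw [real_inner_comm]
    exact this
  have hfix₁ : g₁ b = b := gset_fix hR h₁ hb'
  have hfix₂ : g₂ b = b := gset_fix hR h₂ hb'
  have hspan : g₁ a = g₂ a := by
    have e₁ : g₁ a = (hlin₁.mk' g₁) a := rfl
    have e₂ : g₂ a = (hlin₂.mk' g₂) a := rfl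
    rw [e₁, e₂]
    refine LinearMap.eqOn_span' ?_ ha
    intro v hv
    simpa using h v hv
  rw [hlin₁.map_add, hlin₂.map_add, hspan, hfix₁, hfix₂]

theorem gset_finite (hR : IsNRS R) : Finite ↥(Gset R) := by
  classical
  let Φ : ↥(Gset R) → ({β // β ∈ R} → {β // β ∈ R}) := fun g β =>
    ⟨g.1 β.1, gset_maps hR g.2 β.2⟩
  have hinj : Function.Injective Φ := by
    intro g₁ g₂ hΦ
    apply Subtype.ext
    refine gset_ext hR g₁.2 g₂.2 ?_
    intro β hβ
    have := congrFun hΦ ⟨β, hβ⟩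
    exact congrArg Subtype.val this
  exact Finite.of_injective Φ hinj

lemma K_pos (hR : IsNRS R) : 0 < Nat.card (Gset R) := by
  have : Finite ↥(Gset R) := gset_finite hR
  have : Nonempty ↥(Gset R) := ⟨⟨id, id_mem_Gset⟩⟩
  exact Nat.card_pos

def orb (R : Finset (V N)) (y : V N) : Set (V N) := (fun g => g y) '' Gset R

lemma gset_set_finite (hR : IsNRS R) : (Gset R).Finite := by
  have : Finite ↥(Gset R) := gset_finite hR
  exact (Gset R).toFinite

lemma orb_finite (hR : IsNRS R) (y : V N) : (orb R y).Finite :=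
  (gset_set_finite hR).image _

lemma mem_orb_self (y : V N) : y ∈ orb R y := ⟨id, id_mem_Gset, rfl⟩

lemma orb_nonempty (y : V N) : (orb R y).Nonempty := ⟨y, mem_orb_self y⟩

lemma orb_card_le (hR : IsNRS R) (y : V N) :
    (orb R y).ncard ≤ Nat.card (Gset R) := by
  rw [← Nat.card_coe_set_eq]
  calc (orb R y).ncard ≤ (Gset R).ncard := Set.ncard_image_le (gset_set_finite hR)
  _ = Nat.card (Gset R) := (Nat.card_coe_set_eq _).symm

lemma sigma'_mem_orb (hR : IsNRS R) {α : V N} (hα : α ∈ R) {z y : V N} (hz : z ∈ orb R y) :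
    sigma' α z ∈ orb R y := by
  obtain ⟨g, hg, rfl⟩ := hz
  exact ⟨sigma' α ∘ g, comp_mem_Gset (wordF_mem_Gset (l := [α]) (by simpa using hα)) hg, rfl⟩

lemma gset_mem_orb (hR : IsNRS R) {g : V N → V N} (hg : g ∈ Gset R) {z y : V N}
    (hz : z ∈ orb R y) : g z ∈ orb R y := by
  obtain ⟨h, hh, rfl⟩ := hz
  exact ⟨g ∘ h, comp_mem_Gset hg hh, rfl⟩

lemma orb_eq_of_mem (hR : IsNRS R) {z y : V N} (hz : z ∈ orb R y) : orb R z = orb R y := by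
  obtain ⟨g, hg, rfl⟩ := hz
  ext w
  constructor
  · rintro ⟨h, hh, rfl⟩
    exact ⟨h ∘ g, comp_mem_Gset hh hg, rfl⟩
  · rintro ⟨h, hh, rfl⟩
    obtain ⟨g', hg', hgg', hg'g⟩ := gset_inv hR hg
    refine ⟨h ∘ g', comp_mem_Gset hh hg', ?_⟩
    show h (g' (g y)) = h y
    rw [hg'g]

lemma mem_orb_symm (hR : IsNRS R) {z y : V N} (hz : z ∈ orb R y) : y ∈ orb R z := by
  rw [orb_eq_of_mem hR hz]
  exact mem_orb_self y

lemma sigmaL_mem_orb (hR : IsNRS R) {l : List (V N)} (hl : ∀ α ∈ l, α ∈ R) {z y : V N}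
    (hz : z ∈ orb R y) : sigmaL l z ∈ orb R y := by
  have := gset_mem_orb hR (sigmaL_mem_Gset hl) hz
  exact this





instance : DecidableEq (V N) := Classical.decEq _

lemma R_ne_zero (hR : IsNRS R) {α : V N} (hα : α ∈ R) : α ≠ 0 := by
  intro h; rw [h] at hα; exact hR.ne_zero hα

lemma sigma'_self (hR : IsNRS R) {α : V N} (hα : α ∈ R) : sigma' α α = -α := by
  rw [sigma'_eq hR hα, real_inner_self_eq_norm_sq, hR.normSq α hα, two_smul]
  abel

lemma sigma'_neg (α x : V N) : sigma' (-α) x = sigma' α x := by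
  unfold sigma'
  rw [inner_neg_right, norm_neg]
  module

lemma sigma'_fix (hR : IsNRS R) {α : V N} (hα : α ∈ R) {x : V N} (h : ⟪x, α⟫ = 0) :
    sigma' α x = x := by
  rw [sigma'_eq hR hα, h]; simp

/-- Nonnegative cone membership. -/
def CIn (Δ : Finset (V N)) (x : V N) : Prop :=
  ∃ c : V N → ℝ, (∀ v, 0 ≤ c v) ∧ x = ∑ γ ∈ Δ, c γ • γ

lemma CIn_mem {Δ : Finset (V N)} {γ : V N} (hγ : γ ∈ Δ) : CIn Δ γ := by
  classical
  refine ⟨fun v => if v = γ then 1 else 0, fun v => by positivity, ?_⟩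
  have h : ∀ v ∈ Δ, (if v = γ then (1:ℝ) else 0) • v = if v = γ then v else 0 := by
    intro v _; split <;> simp
  rw [Finset.sum_congr rfl h, Finset.sum_ite_eq' Δ γ (fun v => v), if_pos hγ]

lemma CIn_trans {Δ S : Finset (V N)} {x : V N} (hx : CIn S x)
    (hS : ∀ γ ∈ S, CIn Δ γ) : CIn Δ x := by
  classical
  obtain ⟨c, hc0, rfl⟩ := hx
  choose! d hd0 hd using hS
  refine ⟨fun v => ∑ γ ∈ S, c γ * d γ v, fun v => Finset.sum_nonneg fun γ hγ =>
    mul_nonneg (hc0 γ) (hd0 γ hγ v), ?_⟩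
  have key : ∀ γ ∈ S, c γ • γ = ∑ v ∈ Δ, (c γ * d γ v) • v := by
    intro γ hγ
    have h2 : c γ • (∑ v ∈ Δ, d γ v • v) = ∑ v ∈ Δ, (c γ * d γ v) • v := by
      rw [Finset.smul_sum]
      exact Finset.sum_congr rfl fun v _ => (smul_smul _ _ _)
    rw [← hd γ hγ] at h2
    exact h2
  rw [Finset.sum_congr rfl key, Finset.sum_comm]
  exact Finset.sum_congr rfl fun v _ => (Finset.sum_smul).symm

/-- Existence of an extreme generating subset. -/
lemma Delta_exists (S : Finset (V N)) :
    ∃ Δ ⊆ S, (∀ β ∈ S, CIn Δ β) ∧ ∀ δ ∈ Δ, ¬CIn (Δ.erase δ) δ := by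
  classical
  induction S using Finset.strongInduction with
  | _ S ih =>
    by_cases h : ∀ δ ∈ S, ¬CIn (S.erase δ) δ
    · exact ⟨S, Finset.Subset.refl S, fun β hβ => CIn_mem hβ, h⟩
    · push_neg at h
      obtain ⟨δ, hδS, hδ⟩ := h
      obtain ⟨Δ, hΔsub, hgen, hext⟩ := ih (S.erase δ) (Finset.erase_ssubset hδS)
      refine ⟨Δ, hΔsub.trans (Finset.erase_subset δ S), fun β hβ => ?_, hext⟩
      by_cases hβδ : β = δ
      · subst hβδ
        exact CIn_trans hδ hgen
      · exact hgen β (Finset.mem_erase.2 ⟨hβδ, hβ⟩)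

section PosSystem

variable (hR : IsNRS R) (u₀ : V N) (hreg : ∀ α ∈ R, ⟪u₀, α⟫ ≠ 0)

lemma inner_u₀_sum (Δ : Finset (V N)) (c : V N → ℝ) :
    ⟪u₀, ∑ γ ∈ Δ, c γ • γ⟫ = ∑ γ ∈ Δ, c γ * ⟪u₀, γ⟫ := by
  rw [inner_sum]
  exact Finset.sum_congr rfl fun γ _ => real_inner_smul_right _ _ _

end PosSystem





lemma sum_coeff_helper (E : Finset (V N)) (a c : ℝ) (t : V N → ℝ) (g : V N) (hg : g ∈ E) :
    ∑ v ∈ E, (a * ((if v = g then c else 0) + t v)) • v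
      = a • (c • g + ∑ v ∈ E, t v • v) := by
  have h1 : ∀ v ∈ E, (a * ((if v = g then c else 0) + t v)) • v
      = a • ((if v = g then c • v else 0) + t v • v) := by
    intro v _; split <;> module
  rw [Finset.sum_congr rfl h1, ← Finset.smul_sum, Finset.sum_add_distrib,
    Finset.sum_ite_eq' E g (fun v => c • v), if_pos hg]

lemma sum_smul_coeff (E : Finset (V N)) (a : ℝ) (t : V N → ℝ) :
    ∑ v ∈ E, (a * t v) • v = a • ∑ v ∈ E, t v • v := by
  rw [Finset.smul_sum]
  exact Finset.sum_congr rfl fun v _ => mul_smul _ _ _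

section PosSystem

variable (hR : IsNRS R) (u₀ : V N) (hreg : ∀ α ∈ R, ⟪u₀, α⟫ ≠ 0)
variable (Δ : Finset (V N)) (hΔR : ∀ δ ∈ Δ, δ ∈ R) (hΔpos : ∀ δ ∈ Δ, 0 < ⟪u₀, δ⟫)
variable (hgen : ∀ β ∈ R, 0 < ⟪u₀, β⟫ → CIn Δ β) (hext : ∀ δ ∈ Δ, ¬CIn (Δ.erase δ) δ)

include hR hreg hΔR hΔpos hgen hext in
lemma obtuse {γ γ' : V N} (hγ : γ ∈ Δ) (hγ' : γ' ∈ Δ) (hne : γ ≠ γ') :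
    ⟪γ', γ⟫ ≤ 0 := by
  by_contra hc
  push_neg at hc
  set c := ⟪γ', γ⟫ with hcdef
  have hγR := hΔR γ hγ
  have hγ'R := hΔR γ' hγ'
  have hθR : sigma' γ γ' ∈ R := hR.reflMem γ hγR γ' hγ'R
  have hθ : sigma' γ γ' = γ' - c • γ := sigma'_eq hR hγR γ'
  rcases (hreg _ hθR).lt_or_gt with hneg | hpos
  · -- f θ < 0 : use -θ ∈ Π
    have hnθR : -sigma' γ γ' ∈ R := neg_mem hR hθR
    have hnθpos : 0 < ⟪u₀, -sigma' γ γ'⟫ := by rw [inner_neg_right]; linarith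
    obtain ⟨t, ht0, hts⟩ := hgen _ hnθR hnθpos
    have heq : c • γ = γ' + ∑ v ∈ Δ, t v • v := by
      rw [← hts, hθ]; abel
    have hs : ∑ v ∈ Δ, t v • v = t γ • γ + ∑ v ∈ Δ.erase γ, t v • v :=
      (Finset.add_sum_erase Δ _ hγ).symm
    have heq2 : c • γ = γ' + (t γ • γ + ∑ v ∈ Δ.erase γ, t v • v) := by
      rw [← hs]; exact heq
    by_cases htγ : t γ < c
    · apply hext γ hγ
      refine ⟨fun v => (c - t γ)⁻¹ * ((if v = γ' then 1 else 0) + t v), ?_, ?_⟩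
      · intro v
        have h1 : (0:ℝ) ≤ (c - t γ)⁻¹ := inv_nonneg.2 (by linarith)
        exact mul_nonneg h1 (add_nonneg (by split <;> norm_num) (ht0 v))
      · rw [sum_coeff_helper (Δ.erase γ) ((c - t γ)⁻¹) 1 t γ'
          (Finset.mem_erase.2 ⟨hne.symm, hγ'⟩), one_smul]
        have h2 : γ' + ∑ v ∈ Δ.erase γ, t v • v = (c - t γ) • γ := by
          rw [sub_smul]
          linear_combination (norm := module) -heq2
        rw [h2, smul_smul, inv_mul_cancel₀ (by linarith), one_smul]
    · push_neg at htγ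
      have hf := congrArg (fun x => ⟪u₀, x⟫) heq
      simp only [real_inner_smul_right, inner_add_right] at hf
      rw [inner_u₀_sum u₀ Δ t] at hf
      have hsum : t γ * ⟪u₀, γ⟫ ≤ ∑ v ∈ Δ, t v * ⟪u₀, v⟫ :=
        Finset.single_le_sum (fun v hv => mul_nonneg (ht0 v) (le_of_lt (hΔpos v hv))) hγ
      have h3 : c * ⟪u₀, γ⟫ ≤ t γ * ⟪u₀, γ⟫ :=
        mul_le_mul_of_nonneg_right htγ (le_of_lt (hΔpos γ hγ))
      have h4 : 0 < ⟪u₀, γ'⟫ := hΔpos γ' hγ'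
      linarith
  · -- f θ > 0 : θ ∈ Π
    obtain ⟨t, ht0, hts⟩ := hgen _ hθR hpos
    have heq : γ' = c • γ + ∑ v ∈ Δ, t v • v := by
      rw [← hts, hθ]; abel
    have hs : ∑ v ∈ Δ, t v • v = t γ' • γ' + ∑ v ∈ Δ.erase γ', t v • v :=
      (Finset.add_sum_erase Δ _ hγ').symm
    have heq2 : γ' = c • γ + (t γ' • γ' + ∑ v ∈ Δ.erase γ', t v • v) := by
      rw [← hs]; exact heq
    by_cases htγ' : t γ' < 1
    · apply hext γ' hγ'
      refine ⟨fun v => (1 - t γ')⁻¹ * ((if v = γ then c else 0) + t v), ?_, ?_⟩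
      · intro v
        have h1 : (0:ℝ) ≤ (1 - t γ')⁻¹ := inv_nonneg.2 (by linarith)
        exact mul_nonneg h1 (add_nonneg (by split <;> [linarith; norm_num]) (ht0 v))
      · rw [sum_coeff_helper (Δ.erase γ') ((1 - t γ')⁻¹) c t γ
          (Finset.mem_erase.2 ⟨hne, hγ⟩)]
        have h2 : c • γ + ∑ v ∈ Δ.erase γ', t v • v = (1 - t γ') • γ' := by
          rw [sub_smul, one_smul]
          linear_combination (norm := module) -heq2
        rw [h2, smul_smul, inv_mul_cancel₀ (by linarith), one_smul]
    · push_neg at htγ'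
      have hf := congrArg (fun x => ⟪u₀, x⟫) heq
      simp only [real_inner_smul_right, inner_add_right] at hf
      rw [inner_u₀_sum u₀ Δ t] at hf
      have hsum : t γ' * ⟪u₀, γ'⟫ ≤ ∑ v ∈ Δ, t v * ⟪u₀, v⟫ :=
        Finset.single_le_sum (fun v hv => mul_nonneg (ht0 v) (le_of_lt (hΔpos v hv))) hγ'
      have h3 : 1 * ⟪u₀, γ'⟫ ≤ t γ' * ⟪u₀, γ'⟫ :=
        mul_le_mul_of_nonneg_right htγ' (le_of_lt (hΔpos γ' hγ'))
      have h4 : 0 < ⟪u₀, γ⟫ := hΔpos γ hγ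
      have h5 : 0 < c * ⟪u₀, γ⟫ := mul_pos hc h4
      linarith

end PosSystem




section PosSystem

variable (hR : IsNRS R) (u₀ : V N) (hreg : ∀ α ∈ R, ⟪u₀, α⟫ ≠ 0)
variable (Δ : Finset (V N)) (hΔR : ∀ δ ∈ Δ, δ ∈ R) (hΔpos : ∀ δ ∈ Δ, 0 < ⟪u₀, δ⟫)
variable (hgen : ∀ β ∈ R, 0 < ⟪u₀, β⟫ → CIn Δ β) (hext : ∀ δ ∈ Δ, ¬CIn (Δ.erase δ) δ)

include hR hreg hΔR hΔpos hgen hext in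
/-- Humphreys Lemma 1.4 analogue: a simple reflection keeps other positive roots positive. -/
lemma simple_perm {δ β : V N} (hδ : δ ∈ Δ) (hβR : β ∈ R) (hβpos : 0 < ⟪u₀, β⟫)
    (hne : β ≠ δ) : 0 < ⟪u₀, sigma' δ β⟫ := by
  have hδR := hΔR δ hδ
  have hσR : sigma' δ β ∈ R := hR.reflMem δ hδR β hβR
  rcases (hreg _ hσR).lt_or_gt with hneg | hpos
  swap
  · exact hpos
  exfalso
  set m := ⟪β, δ⟫ with hmdef
  have hσ : sigma' δ β = β - m • δ := sigma'_eq hR hδR β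
  obtain ⟨cc, hc0, hcs⟩ := hgen β hβR hβpos
  have hnσR : -sigma' δ β ∈ R := neg_mem hR hσR
  have hnσpos : 0 < ⟪u₀, -sigma' δ β⟫ := by rw [inner_neg_right]; linarith
  obtain ⟨d, hd0, hds⟩ := hgen _ hnσR hnσpos
  have hds' : m • δ - β = ∑ v ∈ Δ, d v • v := by
    rw [← hds, hσ]; abel
  set e := fun v => cc v + d v with hedef
  have he0 : ∀ v, 0 ≤ e v := fun v => add_nonneg (hc0 v) (hd0 v)
  have heq : m • δ = ∑ v ∈ Δ, e v • v := by
    have h0 : m • δ = β + (m • δ - β) := by abel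
    rw [h0, hds', hcs, ← Finset.sum_add_distrib]
    exact Finset.sum_congr rfl fun v _ => (add_smul _ _ _).symm
  have hf : m * ⟪u₀, δ⟫ = ∑ v ∈ Δ, e v * ⟪u₀, v⟫ := by
    have h1 := congrArg (fun x => ⟪u₀, x⟫) heq
    simpa only [real_inner_smul_right, inner_u₀_sum u₀ Δ e] using h1
  have htermnn : ∀ v ∈ Δ, 0 ≤ e v * ⟪u₀, v⟫ :=
    fun v hv => mul_nonneg (he0 v) (le_of_lt (hΔpos v hv))
  have hδ0 : δ ≠ 0 := R_ne_zero hR hδR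
  have hm : 0 < m := by
    by_contra h
    push_neg at h
    have hsum0 : ∑ v ∈ Δ, e v * ⟪u₀, v⟫ = 0 := by
      have hle : ∑ v ∈ Δ, e v * ⟪u₀, v⟫ ≤ 0 := by
        rw [← hf]
        exact mul_nonpos_of_nonpos_of_nonneg h (le_of_lt (hΔpos δ hδ))
      exact le_antisymm hle (Finset.sum_nonneg htermnn)
    have hez : ∀ v ∈ Δ, e v = 0 := by
      intro v hv
      have h2 := (Finset.sum_eq_zero_iff_of_nonneg htermnn).1 hsum0 v hv
      rcases mul_eq_zero.1 h2 with h' | h'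
      · exact h'
      · exact absurd h' (ne_of_gt (hΔpos v hv))
    have h3 : m • δ = 0 := by
      rw [heq]; exact Finset.sum_eq_zero fun v hv => by rw [hez v hv, zero_smul]
    have hm0 : m = 0 := by
      rcases smul_eq_zero.1 h3 with h' | h'
      · exact h'
      · exact absurd h' hδ0
    rw [hσ, hm0, zero_smul, sub_zero] at hneg
    linarith
  have hsplitf : m * ⟪u₀, δ⟫ = e δ * ⟪u₀, δ⟫ + ∑ v ∈ Δ.erase δ, e v * ⟪u₀, v⟫ := by
    rw [hf, ← Finset.add_sum_erase Δ (fun v => e v * ⟪u₀, v⟫) hδ]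
  by_cases hlt : e δ < m
  · apply hext δ hδ
    refine ⟨fun v => (m - e δ)⁻¹ * e v,
      fun v => mul_nonneg (inv_nonneg.2 (by linarith)) (he0 v), ?_⟩
    rw [sum_smul_coeff]
    have hS : ∑ v ∈ Δ.erase δ, e v • v = (m - e δ) • δ := by
      have hs : ∑ v ∈ Δ, e v • v = e δ • δ + ∑ v ∈ Δ.erase δ, e v • v :=
        (Finset.add_sum_erase Δ _ hδ).symm
      have heq2 : m • δ = e δ • δ + ∑ v ∈ Δ.erase δ, e v • v := by
        rw [← hs]; exact heq
      rw [sub_smul]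
      linear_combination (norm := module) -heq2
    rw [hS, smul_smul, inv_mul_cancel₀ (by linarith), one_smul]
  · push_neg at hlt
    have hrest0 : ∑ v ∈ Δ.erase δ, e v * ⟪u₀, v⟫ = 0 := by
      have h1 : 0 ≤ (e δ - m) * ⟪u₀, δ⟫ :=
        mul_nonneg (by linarith) (le_of_lt (hΔpos δ hδ))
      have h2 : 0 ≤ ∑ v ∈ Δ.erase δ, e v * ⟪u₀, v⟫ :=
        Finset.sum_nonneg fun v hv => htermnn v (Finset.mem_of_mem_erase hv)
      nlinarith [hsplitf]
    have hez : ∀ v ∈ Δ.erase δ, e v = 0 := by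
      intro v hv
      have h2 := (Finset.sum_eq_zero_iff_of_nonneg
        (fun v hv => htermnn v (Finset.mem_of_mem_erase hv))).1 hrest0 v hv
      rcases mul_eq_zero.1 h2 with h' | h'
      · exact h'
      · exact absurd h' (ne_of_gt (hΔpos v (Finset.mem_of_mem_erase hv)))
    have hcz : ∀ v ∈ Δ.erase δ, cc v = 0 := by
      intro v hv
      have h1 := hez v hv
      have h2 := hc0 v
      have h3 := hd0 v
      simp only [hedef] at h1
      linarith
    have hβδ : β = cc δ • δ := by
      rw [hcs, ← Finset.add_sum_erase Δ (fun v => cc v • v) hδ,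
        Finset.sum_eq_zero (fun v hv => by rw [hcz v hv, zero_smul]), add_zero]
    rcases hR.two δ hδR β hβR ⟨cc δ, hβδ⟩ with h | h
    · exact hne h
    · rw [h, inner_neg_right] at hβpos
      linarith [hΔpos δ hδ]

end PosSystem




lemma sigma'_conj (hR : IsNRS R) {g g' : V N → V N} (hg : g ∈ Gset R)
    (hgg' : ∀ y, g (g' y) = y) (hg'g : ∀ y, g' (g y) = y) {α : V N} (hα : α ∈ R) (x : V N) :
    sigma' (g α) x = g (sigma' α (g' x)) := by
  have hgαR : g α ∈ R := gset_maps hR hg hα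
  have hlin := gset_lin hR hg
  rw [sigma'_eq hR hgαR, sigma'_eq hR hα, hlin.map_sub, hlin.map_smul, hgg']
  congr 2
  have h := gset_inner hR hg (g' x) α
  rw [hgg'] at h
  exact h

lemma sigmaL_maps (hR : IsNRS R) {l : List (V N)} (hl : ∀ α ∈ l, α ∈ R) {β : V N}
    (hβ : β ∈ R) : sigmaL l β ∈ R := by
  rw [sigmaL_eq_wordF]
  exact wordF_maps hR (fun a ha => hl a (List.mem_reverse.1 ha)) hβ

lemma sigmaL_inner (hR : IsNRS R) {l : List (V N)} (hl : ∀ α ∈ l, α ∈ R) (x y : V N) :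
    ⟪sigmaL l x, sigmaL l y⟫ = ⟪x, y⟫ := by
  rw [sigmaL_eq_wordF, sigmaL_eq_wordF]
  exact wordF_inner hR (fun a ha => hl a (List.mem_reverse.1 ha)) x y

section PosSystem

variable (hR : IsNRS R) (u₀ : V N) (hreg : ∀ α ∈ R, ⟪u₀, α⟫ ≠ 0)
variable (Δ : Finset (V N)) (hΔR : ∀ δ ∈ Δ, δ ∈ R) (hΔpos : ∀ δ ∈ Δ, 0 < ⟪u₀, δ⟫)
variable (hgen : ∀ β ∈ R, 0 < ⟪u₀, β⟫ → CIn Δ β) (hext : ∀ δ ∈ Δ, ¬CIn (Δ.erase δ) δ)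

include hR hreg hΔR hΔpos hgen hext in
lemma gen_word : ∀ (n : ℕ) {β : V N}, β ∈ R → 0 < ⟪u₀, β⟫ →
    (R.filter (fun b => ⟪u₀, b⟫ < ⟪u₀, β⟫)).card ≤ n →
    ∃ (l : List (V N)) (δ : V N), (∀ γ ∈ l, γ ∈ Δ) ∧ δ ∈ Δ ∧ β = wordF l δ := by
  intro n
  induction n with
  | zero =>
    intro β hβR hβpos hcard
    by_cases hβΔ : β ∈ Δ
    · exact ⟨[], β, by simp, hβΔ, rfl⟩
    · exfalso
      -- find γ ∈ Δ with ⟪β,γ⟫ > 0, then σ_γ β has smaller f-value, contradicting card = 0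
      obtain ⟨cc, hc0, hcs⟩ := hgen β hβR hβpos
      have h2 : (0:ℝ) < ⟪β, β⟫ := by
        rw [real_inner_self_eq_norm_sq, hR.normSq β hβR]; norm_num
      have hsum : ⟪β, β⟫ = ∑ v ∈ Δ, cc v * ⟪β, v⟫ := by
        have h' := inner_u₀_sum β Δ cc
        rw [← hcs] at h'
        exact h'
      have hex : ∃ v ∈ Δ, 0 < cc v * ⟪β, v⟫ := by
        by_contra hno
        push_neg at hno
        have : ∑ v ∈ Δ, cc v * ⟪β, v⟫ ≤ 0 := Finset.sum_nonpos hno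
        linarith
      obtain ⟨v, hvΔ, hv⟩ := hex
      have hβv : 0 < ⟪β, v⟫ := by
        rcases lt_or_ge 0 ⟪β, v⟫ with h | h
        · exact h
        · nlinarith [hc0 v]
      have hne : β ≠ v := fun h => hβΔ (h ▸ hvΔ)
      have hβ' : 0 < ⟪u₀, sigma' v β⟫ :=
        simple_perm hR u₀ hreg Δ hΔR hΔpos hgen hext hvΔ hβR hβpos hne
      have hβ'R : sigma' v β ∈ R := hR.reflMem v (hΔR v hvΔ) β hβR
      have hlt : ⟪u₀, sigma' v β⟫ < ⟪u₀, β⟫ := by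
        rw [sigma'_eq hR (hΔR v hvΔ), inner_sub_right, real_inner_smul_right]
        have := hΔpos v hvΔ
        nlinarith
      have : sigma' v β ∈ R.filter (fun b => ⟪u₀, b⟫ < ⟪u₀, β⟫) :=
        Finset.mem_filter.2 ⟨hβ'R, hlt⟩
      have := Finset.card_pos.2 ⟨_, this⟩
      omega
  | succ n ih =>
    intro β hβR hβpos hcard
    by_cases hβΔ : β ∈ Δ
    · exact ⟨[], β, by simp, hβΔ, rfl⟩
    · obtain ⟨cc, hc0, hcs⟩ := hgen β hβR hβpos
      have h2 : (0:ℝ) < ⟪β, β⟫ := by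
        rw [real_inner_self_eq_norm_sq, hR.normSq β hβR]; norm_num
      have hsum : ⟪β, β⟫ = ∑ v ∈ Δ, cc v * ⟪β, v⟫ := by
        have h' := inner_u₀_sum β Δ cc
        rw [← hcs] at h'
        exact h'
      have hex : ∃ v ∈ Δ, 0 < cc v * ⟪β, v⟫ := by
        by_contra hno
        push_neg at hno
        have : ∑ v ∈ Δ, cc v * ⟪β, v⟫ ≤ 0 := Finset.sum_nonpos hno
        linarith
      obtain ⟨v, hvΔ, hv⟩ := hex
      have hβv : 0 < ⟪β, v⟫ := by
        rcases lt_or_ge 0 ⟪β, v⟫ with h | h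
        · exact h
        · nlinarith [hc0 v]
      have hne : β ≠ v := fun h => hβΔ (h ▸ hvΔ)
      have hβ'pos : 0 < ⟪u₀, sigma' v β⟫ :=
        simple_perm hR u₀ hreg Δ hΔR hΔpos hgen hext hvΔ hβR hβpos hne
      have hβ'R : sigma' v β ∈ R := hR.reflMem v (hΔR v hvΔ) β hβR
      have hlt : ⟪u₀, sigma' v β⟫ < ⟪u₀, β⟫ := by
        rw [sigma'_eq hR (hΔR v hvΔ), inner_sub_right, real_inner_smul_right]
        have := hΔpos v hvΔ
        nlinarith
      have hss : R.filter (fun b => ⟪u₀, b⟫ < ⟪u₀, sigma' v β⟫) ⊂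
          R.filter (fun b => ⟪u₀, b⟫ < ⟪u₀, β⟫) := by
        refine Finset.ssubset_iff_of_subset ?_ |>.2 ?_
        · intro b hb
          rcases Finset.mem_filter.1 hb with ⟨h1, h3⟩
          exact Finset.mem_filter.2 ⟨h1, by linarith⟩
        · exact ⟨sigma' v β, Finset.mem_filter.2 ⟨hβ'R, hlt⟩,
            fun hmem => by have := (Finset.mem_filter.1 hmem).2; linarith⟩
      have hcard' : (R.filter (fun b => ⟪u₀, b⟫ < ⟪u₀, sigma' v β⟫)).card ≤ n := by
        have := Finset.card_lt_card hss
        omega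
      obtain ⟨l, δ, hlΔ, hδΔ, hword⟩ := ih hβ'R hβ'pos hcard'
      refine ⟨v :: l, δ, ?_, hδΔ, ?_⟩
      · intro γ hγ
        rcases List.mem_cons.1 hγ with h | h
        · exact h ▸ hvΔ
        · exact hlΔ γ h
      · rw [wordF_cons]
        show β = sigma' v (wordF l δ)
        rw [← hword]
        exact (sigma'_invol hR (hΔR v hvΔ) β).symm

include hR hreg hΔR hΔpos hgen hext in
lemma refl_word {β : V N} (hβR : β ∈ R) (hβpos : 0 < ⟪u₀, β⟫) :
    ∃ l' : List (V N), (∀ γ ∈ l', γ ∈ Δ) ∧ ∀ x, sigma' β x = wordF l' x := by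
  obtain ⟨l, δ, hlΔ, hδΔ, hword⟩ := gen_word hR u₀ hreg Δ hΔR hΔpos hgen hext
    (R.filter (fun b => ⟪u₀, b⟫ < ⟪u₀, β⟫)).card hβR hβpos (le_refl _)
  have hlR : ∀ α ∈ l, α ∈ R := fun α hα => hΔR α (hlΔ α hα)
  have hg : wordF l ∈ Gset R := wordF_mem_Gset hlR
  refine ⟨l ++ δ :: l.reverse, ?_, ?_⟩
  · intro γ hγ
    rcases List.mem_append.1 hγ with h | h
    · exact hlΔ γ h
    · rcases List.mem_cons.1 h with h | h
      · exact h ▸ hδΔ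
      · exact hlΔ γ (List.mem_reverse.1 h)
  · intro x
    have hconj := sigma'_conj hR hg (wordF_reverse_comp hR hlR) (wordF_comp_reverse hR hlR)
      (hΔR δ hδΔ) x
    rw [hword, hconj, wordF_append, wordF_cons]
    rfl

include hR hreg hΔR hΔpos hgen hext in
lemma word_to_simple : ∀ l : List (V N), (∀ α ∈ l, α ∈ R) →
    ∃ l' : List (V N), (∀ γ ∈ l', γ ∈ Δ) ∧ ∀ x, wordF l x = wordF l' x := by
  intro l hl
  induction l with
  | nil => exact ⟨[], by simp, fun x => rfl⟩
  | cons a t iht =>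
    have haR := hl a (List.mem_cons_self)
    obtain ⟨l't, hl't, hwt⟩ := iht (fun α hα => hl α (List.mem_cons_of_mem a hα))
    have key : ∃ β, β ∈ R ∧ 0 < ⟪u₀, β⟫ ∧ ∀ x, sigma' a x = sigma' β x := by
      rcases (hreg a haR).lt_or_gt with hneg | hpos
      · exact ⟨-a, neg_mem hR haR, by rw [inner_neg_right]; linarith,
          fun x => (sigma'_neg a x).symm⟩
      · exact ⟨a, haR, hpos, fun x => rfl⟩
    obtain ⟨β, hβR, hβpos, hβeq⟩ := key
    obtain ⟨l'a, hl'a, hwa⟩ := refl_word hR u₀ hreg Δ hΔR hΔpos hgen hext hβR hβpos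
    refine ⟨l'a ++ l't, ?_, ?_⟩
    · intro γ hγ
      rcases List.mem_append.1 hγ with h | h
      exacts [hl'a γ h, hl't γ h]
    · intro x
      rw [wordF_append, wordF_cons]
      show sigma' a (wordF t x) = wordF l'a (wordF l't x)
      rw [hβeq, hwa, hwt]

include hR hreg hΔR hΔpos hgen hext in
lemma sigmaL_to_simple {l : List (V N)} (hl : ∀ α ∈ l, α ∈ R) :
    ∃ l' : List (V N), (∀ γ ∈ l', γ ∈ Δ) ∧ ∀ y, sigmaL l y = sigmaL l' y := by
  obtain ⟨m, hmΔ, hm⟩ := word_to_simple hR u₀ hreg Δ hΔR hΔpos hgen hext l.reverse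
    (fun α hα => hl α (List.mem_reverse.1 hα))
  refine ⟨m.reverse, fun γ hγ => hmΔ γ (List.mem_reverse.1 hγ), fun y => ?_⟩
  rw [sigmaL_eq_wordF, sigmaL_eq_wordF, List.reverse_reverse, hm]

end PosSystem




section PosSystem

variable (hR : IsNRS R) (u₀ : V N) (hreg : ∀ α ∈ R, ⟪u₀, α⟫ ≠ 0)
variable (Δ : Finset (V N)) (hΔR : ∀ δ ∈ Δ, δ ∈ R) (hΔpos : ∀ δ ∈ Δ, 0 < ⟪u₀, δ⟫)
variable (hgen : ∀ β ∈ R, 0 < ⟪u₀, β⟫ → CIn Δ β) (hext : ∀ δ ∈ Δ, ¬CIn (Δ.erase δ) δ)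

include hR hreg hΔR hΔpos hgen hext in
lemma exchange {l : List (V N)} (hl : ∀ γ ∈ l, γ ∈ Δ) {δ : V N} (hδ : δ ∈ Δ)
    (hneg : ⟪u₀, sigmaL l δ⟫ < 0) :
    ∃ l' : List (V N), (∀ γ ∈ l', γ ∈ Δ) ∧ l'.length + 1 = l.length ∧
      ∀ y, sigmaL (δ :: l) y = sigmaL l' y := by
  classical
  have hδR : δ ∈ R := hΔR δ hδ
  have hlR : ∀ α ∈ l, α ∈ R := fun α hα => hΔR α (hl α hα)
  set P : ℕ → Prop := fun i => ⟪u₀, sigmaL (l.take i) δ⟫ < 0 with hPdef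
  haveI : DecidablePred P := Classical.decPred P
  have hPlen : P l.length := by
    show ⟪u₀, sigmaL (l.take l.length) δ⟫ < 0
    rwa [List.take_length]
  set i := Nat.find ⟨l.length, hPlen⟩ with hidef
  have hPi : P i := Nat.find_spec ⟨l.length, hPlen⟩
  have hile : i ≤ l.length := Nat.find_min' _ hPlen
  have hi0 : i ≠ 0 := by
    intro h
    have := hPi
    rw [h] at this
    simp only [P, List.take_zero] at this
    exact absurd this (by simpa [sigmaL_nil] using not_lt.2 (le_of_lt (hΔpos δ hδ)))
  set j := i - 1 with hjdef
  have hj : j < l.length := by omega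
  have hPj : ¬ P j := Nat.find_min _ (by omega)
  set γ := l[j]'hj with hγdef
  have hγΔ : γ ∈ Δ := hl γ (List.getElem_mem hj)
  have hγR : γ ∈ R := hΔR γ hγΔ
  set β := sigmaL (l.take j) δ with hβdef
  have htjR : ∀ α ∈ l.take j, α ∈ R := fun α hα => hlR α ((List.take_sublist j l).subset hα)
  have hβR : β ∈ R := sigmaL_maps hR htjR hδR
  have hβpos : 0 < ⟪u₀, β⟫ := by
    rcases (hreg β hβR).lt_or_gt with h | h
    · exact absurd h hPj
    · exact h
  have htake : l.take (j + 1) = l.take j ++ [γ] := by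
    rw [List.take_succ]
    congr 1
    simp [List.getElem?_eq_getElem hj, hγdef]
  have hstep : sigmaL (l.take (j + 1)) δ = sigma' γ β := by
    rw [htake, sigmaL_append]
    rfl
  have hσneg : ⟪u₀, sigma' γ β⟫ < 0 := by
    have hij : i = j + 1 := by omega
    have h : P (j + 1) := hij ▸ hPi
    have h' : ⟪u₀, sigmaL (l.take (j + 1)) δ⟫ < 0 := h
    rwa [hstep] at h'
  have hβγ : β = γ := by
    by_contra hne
    exact absurd (simple_perm hR u₀ hreg Δ hΔR hΔpos hgen hext hγΔ hβR hβpos hne)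
      (not_lt.2 (le_of_lt hσneg))
  -- the word function for the prefix
  set g : V N → V N := fun y => sigmaL (l.take j) y with hgdef
  have hg : g ∈ Gset R := sigmaL_mem_Gset htjR
  obtain ⟨g', hg', hgg', hg'g⟩ := gset_inv hR hg
  have hβg : β = g δ := rfl
  have hkey : ∀ y, sigma' γ (g (sigma' δ y)) = g y := by
    intro y
    have hconj := sigma'_conj hR hg hgg' hg'g hδR
    calc sigma' γ (g (sigma' δ y)) = sigma' (g δ) (g (sigma' δ y)) := by rw [← hβg, hβγ]
    _ = g (sigma' δ (g' (g (sigma' δ y)))) := hconj _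
    _ = g (sigma' δ (sigma' δ y)) := by rw [hg'g]
    _ = g y := by rw [sigma'_invol hR hδR]
  refine ⟨l.take j ++ l.drop (j + 1), ?_, ?_, ?_⟩
  · intro a ha
    rcases List.mem_append.1 ha with h | h
    · exact hl a ((List.take_sublist j l).subset h)
    · exact hl a ((List.drop_sublist (j+1) l).subset h)
  · rw [List.length_append, List.length_take, List.length_drop]
    omega
  · intro y
    have hdecomp : l = (l.take j ++ [γ]) ++ l.drop (j + 1) := by
      rw [← htake, List.take_append_drop]
    calc sigmaL (δ :: l) y = sigmaL l (sigma' δ y) := rfl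
    _ = sigmaL ((l.take j ++ [γ]) ++ l.drop (j + 1)) (sigma' δ y) := by rw [← hdecomp]
    _ = sigmaL (l.drop (j + 1)) (sigmaL [γ] (sigmaL (l.take j) (sigma' δ y))) := by
        rw [sigmaL_append, sigmaL_append]
    _ = sigmaL (l.drop (j + 1)) (sigma' γ (g (sigma' δ y))) := rfl
    _ = sigmaL (l.drop (j + 1)) (g y) := by rw [hkey]
    _ = sigmaL (l.take j ++ l.drop (j + 1)) y := by rw [sigmaL_append]

include hR hreg hΔR hΔpos hgen hext in
lemma FDthm : ∀ (n : ℕ) (l : List (V N)), (∀ γ ∈ l, γ ∈ Δ) → l.length ≤ n →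
    ∀ z w : V N, (∀ β ∈ R, 0 < ⟪u₀, β⟫ → 0 ≤ ⟪z, β⟫) →
    (∀ β ∈ R, 0 < ⟪u₀, β⟫ → 0 ≤ ⟪w, β⟫) → w = sigmaL l z → w = z := by
  intro n
  induction n with
  | zero =>
    intro l hl hlen z w _ _ hw
    have : l = [] := List.length_eq_zero_iff.1 (by omega)
    rw [this] at hw
    exact hw
  | succ n ih =>
    intro l hl hlen z w hdomz hdomw hw
    by_cases hmin : ∃ l'' : List (V N), (∀ γ ∈ l'', γ ∈ Δ) ∧ l''.length < l.length ∧
        ∀ y, sigmaL l'' y = sigmaL l y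
    · obtain ⟨l'', hl'', hlen'', heq''⟩ := hmin
      exact ih l'' hl'' (by omega) z w hdomz hdomw (by rw [hw, ← heq''])
    · cases l with
      | nil => exact hw
      | cons δ t =>
        have hδΔ : δ ∈ Δ := hl δ (List.mem_cons_self)
        have hδR : δ ∈ R := hΔR δ hδΔ
        have htΔ : ∀ γ ∈ t, γ ∈ Δ := fun γ hγ => hl γ (List.mem_cons_of_mem δ hγ)
        have htR : ∀ α ∈ t, α ∈ R := fun α hα => hΔR α (htΔ α hα)
        have htδR : sigmaL t δ ∈ R := sigmaL_maps hR htR hδR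
        have hpos : 0 < ⟪u₀, sigmaL t δ⟫ := by
          rcases (hreg _ htδR).lt_or_gt with h | h
          · exfalso
            obtain ⟨l'', hl'', hlen'', heq''⟩ :=
              exchange hR u₀ hreg Δ hΔR hΔpos hgen hext htΔ hδΔ h
            exact hmin ⟨l'', hl'', by simp only [List.length_cons]; omega,
              fun y => (heq'' y).symm⟩
          · exact h
        -- ⟪z, δ⟫ = 0
        have hgt : (fun y => sigmaL t y) ∈ Gset R := sigmaL_mem_Gset htR
        have hneg : sigmaL (δ :: t) δ = -(sigmaL t δ) := by
          show sigmaL t (sigma' δ δ) = -(sigmaL t δ)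
          rw [sigma'_self hR hδR]
          exact (gset_lin hR hgt).map_neg _
        have hinner : ⟪w, sigmaL (δ :: t) δ⟫ = ⟪z, δ⟫ := by
          rw [hw]
          exact sigmaL_inner hR (fun α hα => hΔR α (hl α hα)) z δ
        have h1 : 0 ≤ ⟪z, δ⟫ := hdomz δ hδR (hΔpos δ hδΔ)
        have h2 : 0 ≤ ⟪w, sigmaL t δ⟫ := hdomw _ htδR hpos
        have hzδ : ⟪z, δ⟫ = 0 := by
          rw [hneg, inner_neg_right] at hinner
          linarith
        have hfix : sigma' δ z = z := sigma'_fix hR hδR hzδ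
        have hw' : w = sigmaL t z := by
          rw [hw]
          show sigmaL t (sigma' δ z) = sigmaL t z
          rw [hfix]
        exact ih t htΔ (by simpa using Nat.le_of_succ_le_succ (by simpa using hlen)) z w
          hdomz hdomw hw'

end PosSystem




lemma sq_eq_imp_eq {a b : ℝ} (ha : 0 ≤ a) (hb : 0 ≤ b) (h : a ^ 2 = b ^ 2) : a = b := by
  nlinarith

lemma sq_lt_imp_lt {a b : ℝ} (ha : 0 ≤ a) (hb : 0 ≤ b) (h : a ^ 2 < b ^ 2) : a < b := by
  nlinarith

lemma regular_exists (S : Finset (V N)) (h0 : ∀ α ∈ S, α ≠ (0 : V N)) :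
    ∃ v : V N, ∀ α ∈ S, ⟪v, α⟫ ≠ 0 := by
  classical
  induction S using Finset.induction_on with
  | empty => exact ⟨0, by simp⟩
  | @insert a S ha ih =>
    obtain ⟨v, hv⟩ := ih (fun α hα => h0 α (Finset.mem_insert_of_mem hα))
    obtain ⟨t, ht⟩ := Infinite.exists_notMem_finset
      ((insert a S).image (fun β => -⟪v, β⟫ / ⟪a, β⟫))
    refine ⟨v + t • a, ?_⟩
    intro β hβ heq
    rw [inner_add_left, real_inner_smul_left] at heq
    by_cases hab : ⟪a, β⟫ = 0
    · rw [hab, mul_zero, add_zero] at heq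
      rcases Finset.mem_insert.1 hβ with rfl | hβS
      · exact h0 β (Finset.mem_insert_self β S) (inner_self_eq_zero.1 hab)
      · exact hv β hβS heq
    · apply ht
      refine Finset.mem_image.2 ⟨β, hβ, ?_⟩
      rw [div_eq_iff hab]
      linarith

lemma claimC (hR : IsNRS R) {z w : V N} (hw : w ∈ orb R z)
    (hch : ∀ α ∈ R, 0 ≤ ⟪z, α⟫ * ⟪w, α⟫) : w = z := by
  classical
  obtain ⟨v₀, hv₀⟩ := regular_exists R (fun α hα => R_ne_zero hR hα)
  set A := R.filter (fun α => ⟪z + w, α⟫ ≠ 0) with hA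
  set ε := if hA' : A.Nonempty then A.inf' hA' (fun α => |⟪z + w, α⟫| / (|⟪v₀, α⟫| + 1))
    else 1 with hε
  have hε0 : 0 < ε := by
    rw [hε]
    split
    · next hA' =>
      rw [Finset.lt_inf'_iff]
      intro b hb
      have hb' := (Finset.mem_filter.1 hb).2
      have : 0 < |⟪z + w, b⟫| := abs_pos.2 hb'
      positivity
    · norm_num
  have hεle : ∀ α ∈ A, ε ≤ |⟪z + w, α⟫| / (|⟪v₀, α⟫| + 1) := by
    intro α hα
    rw [hε, dif_pos ⟨α, hα⟩]
    exact Finset.inf'_le _ hα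
  set u₀ := (z + w) + ε • v₀ with hu₀def
  have hu₀ : ∀ α : V N, ⟪u₀, α⟫ = ⟪z + w, α⟫ + ε * ⟪v₀, α⟫ := by
    intro α
    rw [hu₀def, inner_add_left, real_inner_smul_left]
  have hbound : ∀ α ∈ A, |ε * ⟪v₀, α⟫| < |⟪z + w, α⟫| := by
    intro α hα
    have h1 := hεle α hα
    have hq : (0:ℝ) ≤ |⟪v₀, α⟫| := abs_nonneg _
    have ha : 0 < |⟪z + w, α⟫| := abs_pos.2 (Finset.mem_filter.1 hα).2
    have h2 : ε * (|⟪v₀, α⟫| + 1) ≤ |⟪z + w, α⟫| := by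
      rw [le_div_iff₀ (by linarith : (0:ℝ) < |⟪v₀, α⟫| + 1)] at h1
      exact h1
    rw [abs_mul, abs_of_pos hε0]
    nlinarith
  have hreg' : ∀ α ∈ R, ⟪u₀, α⟫ ≠ 0 := by
    intro α hαR
    by_cases hzw : ⟪z + w, α⟫ = 0
    · rw [hu₀ α, hzw, zero_add]
      exact mul_ne_zero (ne_of_gt hε0) (hv₀ α hαR)
    · have hαA : α ∈ A := Finset.mem_filter.2 ⟨hαR, hzw⟩
      have hb := hbound α hαA
      intro h0
      rw [hu₀ α] at h0
      have : ε * ⟪v₀, α⟫ = -⟪z + w, α⟫ := by linarith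
      rw [this, abs_neg] at hb
      exact lt_irrefl _ hb
  have hdom : ∀ u : V N, (∀ α ∈ R, 0 ≤ ⟪z, α⟫ * ⟪w, α⟫) → (u = z ∨ u = w) →
      ∀ β ∈ R, 0 < ⟪u₀, β⟫ → 0 ≤ ⟪u, β⟫ := by
    intro u hch' hu β hβR hβpos
    have hsum : ⟪z + w, β⟫ = ⟪z, β⟫ + ⟪w, β⟫ := inner_add_left z w β
    by_cases hzw : ⟪z + w, β⟫ = 0
    · have hzero : ⟪z, β⟫ = 0 ∧ ⟪w, β⟫ = 0 := by
        constructor <;> nlinarith [hch' β hβR]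
      rcases hu with rfl | rfl
      · rw [hzero.1]
      · rw [hzero.2]
    · have hβA : β ∈ A := Finset.mem_filter.2 ⟨hβR, hzw⟩
      have hb := hbound β hβA
      have hpos : 0 < ⟪z + w, β⟫ := by
        rcases lt_or_ge 0 ⟪z + w, β⟫ with h | h
        · exact h
        · exfalso
          rw [hu₀ β] at hβpos
          have h1 : ε * ⟪v₀, β⟫ ≤ |ε * ⟪v₀, β⟫| := le_abs_self _
          have h2 : |⟪z + w, β⟫| = -⟪z + w, β⟫ := abs_of_nonpos h
          linarith
      rcases hu with rfl | rfl
      · nlinarith [hch' β hβR]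
      · nlinarith [hch' β hβR]
  have hdomz := hdom z hch (Or.inl rfl)
  have hdomw := hdom w hch (Or.inr rfl)
  -- positive system and extreme generating set
  obtain ⟨Δ, hΔsub, hgenS, hext⟩ := Delta_exists (R.filter (fun α => 0 < ⟪u₀, α⟫))
  have hΔR : ∀ δ ∈ Δ, δ ∈ R := fun δ hδ => (Finset.mem_filter.1 (hΔsub hδ)).1
  have hΔpos : ∀ δ ∈ Δ, 0 < ⟪u₀, δ⟫ := fun δ hδ => (Finset.mem_filter.1 (hΔsub hδ)).2
  have hgen : ∀ β ∈ R, 0 < ⟪u₀, β⟫ → CIn Δ β := fun β hβ hpos =>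
    hgenS β (Finset.mem_filter.2 ⟨hβ, hpos⟩)
  -- express w as a simple word applied to z
  obtain ⟨g, hg, hgw⟩ := hw
  obtain ⟨lg, hlgR, hgdef⟩ := hg
  have hwz : w = sigmaL lg.reverse z := by
    rw [sigmaL_eq_wordF, List.reverse_reverse, ← foldr_eq_wordF, ← hgdef]
    exact hgw.symm
  obtain ⟨l', hl'Δ, hl'⟩ := sigmaL_to_simple hR u₀ hreg' Δ hΔR hΔpos hgen hext
    (l := lg.reverse) (fun α hα => hlgR α (List.mem_reverse.1 hα))
  have hw' : w = sigmaL l' z := by rw [hwz, hl']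
  exact FDthm hR u₀ hreg' Δ hΔR hΔpos hgen hext l'.length l' hl'Δ (le_refl _) z w
    hdomz hdomw hw'

lemma locglob (hR : IsNRS R) (x z : V N) (hch : ∀ α ∈ R, 0 ≤ ⟪x, α⟫ * ⟪z, α⟫) :
    ∀ w ∈ orb R z, ‖x - z‖ ≤ ‖x - w‖ := by
  classical
  set O := (orb_finite hR z).toFinset with hO
  have hmemO : ∀ u, u ∈ O ↔ u ∈ orb R z := fun u => Set.Finite.mem_toFinset _
  have hOne : O.Nonempty := ⟨z, (hmemO z).2 (mem_orb_self z)⟩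
  obtain ⟨w₁, hw₁O, hw₁min⟩ := O.exists_min_image (fun w => ‖x - w‖) hOne
  set M := O.filter (fun w => ∀ u ∈ O, ‖x - w‖ ≤ ‖x - u‖) with hM
  have hMne : M.Nonempty := ⟨w₁, Finset.mem_filter.2 ⟨hw₁O, hw₁min⟩⟩
  obtain ⟨w₀, hw₀M, hw₀min⟩ := M.exists_min_image (fun w => ‖z - w‖) hMne
  have hw₀O : w₀ ∈ O := (Finset.mem_filter.1 hw₀M).1
  have hw₀glob : ∀ u ∈ O, ‖x - w₀‖ ≤ ‖x - u‖ := (Finset.mem_filter.1 hw₀M).2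
  have hclose : ∀ α ∈ R, ∀ u ∈ O, sigma' α u ∈ O := by
    intro α hα u hu
    exact (hmemO _).2 (sigma'_mem_orb hR hα ((hmemO u).1 hu))
  have hchxw : ∀ α ∈ R, 0 ≤ ⟪x, α⟫ * ⟪w₀, α⟫ := by
    intro α hα
    have h := hw₀glob (sigma' α w₀) (hclose α hα w₀ hw₀O)
    have hsq := dist_sq_sigma' hR hα x w₀
    have h2 : ‖x - w₀‖ ^ 2 ≤ ‖x - sigma' α w₀‖ ^ 2 :=
      pow_le_pow_left₀ (norm_nonneg _) h 2
    linarith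
  have hchzw : ∀ α ∈ R, 0 ≤ ⟪z, α⟫ * ⟪w₀, α⟫ := by
    intro α hα
    by_contra hlt
    push_neg at hlt
    have hx0 : ⟪x, α⟫ = 0 := by
      have h1 := hch α hα
      have h2 := hchxw α hα
      have h3 : ⟪x, α⟫ ^ 2 * (⟪z, α⟫ * ⟪w₀, α⟫) ≥ 0 := by nlinarith
      have h4 : ⟪x, α⟫ ^ 2 = 0 := by nlinarith [sq_nonneg ⟪x, α⟫]
      exact pow_eq_zero_iff (n := 2) (by norm_num) |>.1 h4
    have heqd : ‖x - sigma' α w₀‖ = ‖x - w₀‖ := by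
      have hsq := dist_sq_sigma' hR hα x w₀
      rw [hx0] at hsq
      exact sq_eq_imp_eq (norm_nonneg _) (norm_nonneg _) (by linarith)
    have hmem : sigma' α w₀ ∈ M := by
      refine Finset.mem_filter.2 ⟨hclose α hα w₀ hw₀O, ?_⟩
      intro u hu
      rw [heqd]
      exact hw₀glob u hu
    have hlt2 : ‖z - sigma' α w₀‖ < ‖z - w₀‖ := by
      have hsq := dist_sq_sigma' hR hα z w₀
      exact sq_lt_imp_lt (norm_nonneg _) (norm_nonneg _) (by nlinarith)
    have := hw₀min (sigma' α w₀) hmem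
    linarith
  have hw₀z : w₀ = z := claimC hR ((hmemO w₀).1 hw₀O) hchzw
  intro w hworb
  calc ‖x - z‖ = ‖x - w₀‖ := by rw [hw₀z]
  _ ≤ ‖x - w‖ := hw₀glob w ((hmemO w).2 hworb)

lemma dG_eq (hR : IsNRS R) {x q : V N} (hloc : ∀ α ∈ R, 0 ≤ ⟪x, α⟫ * ⟪q, α⟫) :
    dG R x q = ‖x - q‖ := by
  unfold dG
  apply le_antisymm
  · apply csInf_le
    · exact ⟨0, fun r ⟨g, hg, hr⟩ => hr ▸ norm_nonneg _⟩
    · exact ⟨id, id_mem_Gset, rfl⟩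
  · refine le_csInf ⟨‖x - id q‖, ?_⟩ ?_
    · exact ⟨id, id_mem_Gset, rfl⟩
    · rintro r ⟨g, hg, rfl⟩
      exact locglob hR x q hloc (g q) ⟨g, hg, rfl⟩





/-- The list of points visited along a reflection path. -/
def pts : List (V N) → V N → List (V N)
  | [], y => [y]
  | α :: l, y => y :: pts l (sigma' α y)

lemma pts_ne_nil (l : List (V N)) (y : V N) : pts l y ≠ [] := by
  cases l <;> simp [pts]

lemma pts_length (l : List (V N)) (y : V N) : (pts l y).length = l.length + 1 := by
  induction l generalizing y with
  | nil => rfl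
  | cons a t ih => simp [pts, ih]

lemma pts_getElem : ∀ (l : List (V N)) (y : V N) (k : ℕ) (hk : k < l.length + 1),
    (pts l y)[k]'(by rw [pts_length]; omega) = sigmaL (l.take k) y := by
  intro l
  induction l with
  | nil =>
    intro y k hk
    simp only [List.length_nil] at hk
    have hk0 : k = 0 := by omega
    subst hk0
    rfl
  | cons a t ih =>
    intro y k hk
    cases k with
    | zero => rfl
    | succ k =>
      show (pts t (sigma' a y))[k]'_ = _
      rw [ih (sigma' a y) k (by simpa using hk)]
      rfl

lemma mem_pts_iff {l : List (V N)} {y z : V N} :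
    z ∈ pts l y ↔ ∃ k, k ≤ l.length ∧ z = sigmaL (l.take k) y := by
  rw [List.mem_iff_getElem]
  constructor
  · rintro ⟨i, hi, rfl⟩
    have hi' : i < l.length + 1 := by rw [pts_length] at hi; omega
    exact ⟨i, by omega, pts_getElem l y i hi'⟩
  · rintro ⟨k, hk, rfl⟩
    refine ⟨k, by rw [pts_length]; omega, pts_getElem l y k (by omega)⟩

lemma sigmaL_mem_pts (l : List (V N)) (y : V N) : sigmaL l y ∈ pts l y :=
  mem_pts_iff.2 ⟨l.length, le_refl _, by rw [List.take_length]⟩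

lemma self_mem_pts (l : List (V N)) (y : V N) : y ∈ pts l y :=
  mem_pts_iff.2 ⟨0, Nat.zero_le _, rfl⟩

lemma pts_append (l₁ l₂ : List (V N)) (y : V N) :
    pts (l₁ ++ l₂) y = (pts l₁ y).dropLast ++ pts l₂ (sigmaL l₁ y) := by
  induction l₁ generalizing y with
  | nil => rfl
  | cons a t ih =>
    show y :: pts (t ++ l₂) (sigma' a y) = (y :: pts t (sigma' a y)).dropLast ++ _
    rw [List.dropLast_cons_of_ne_nil (pts_ne_nil t (sigma' a y)), ih]
    rfl

/-- Loop erasure: any reflection path can be replaced by one visiting pairwise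
distinct points, with the same endpoints and visiting a subset of the points. -/
lemma loop_erase : ∀ (n : ℕ) (l : List (V N)) (y : V N), l.length ≤ n →
    ∃ l' : List (V N), (∀ a ∈ l', a ∈ l) ∧ sigmaL l' y = sigmaL l y ∧
      (∀ z ∈ pts l' y, z ∈ pts l y) ∧ (pts l' y).Nodup := by
  intro n
  induction n with
  | zero =>
    intro l y hlen
    have : l = [] := List.length_eq_zero_iff.1 (by omega)
    subst this
    exact ⟨[], by simp, rfl, fun z hz => hz, by simp [pts]⟩
  | succ n ih =>
    intro l y hlen
    by_cases hnd : (pts l y).Nodup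
    · exact ⟨l, fun a ha => ha, rfl, fun z hz => hz, hnd⟩
    · -- find a duplicate
      rw [List.nodup_iff_injective_get] at hnd
      have : ∃ i j : Fin (pts l y).length, i < j ∧ (pts l y).get i = (pts l y).get j := by
        by_contra hno
        push_neg at hno
        apply hnd
        intro a b hab
        rcases lt_trichotomy a b with h | h | h
        · exact absurd hab (by intro h'; exact absurd h' (fun h'' => (hno a b h) h''))
        · exact h
        · exact absurd hab.symm (by intro h'; exact absurd h' (fun h'' => (hno b a h) h''))
      obtain ⟨i, j, hij, hijeq⟩ := this
      have hplen : (pts l y).length = l.length + 1 := pts_length l y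
      have hi : (i : ℕ) < l.length + 1 := by omega
      have hj : (j : ℕ) < l.length + 1 := by omega
      have heq : sigmaL (l.take (i : ℕ)) y = sigmaL (l.take (j : ℕ)) y := by
        have h1 := pts_getElem l y i hi
        have h2 := pts_getElem l y j hj
        rw [← h1, ← h2]
        simpa [List.get_eq_getElem] using hijeq
      set l' := l.take (i : ℕ) ++ l.drop (j : ℕ) with hl'
      have hjlen : (j : ℕ) ≤ l.length := by omega
      have hlen' : l'.length < l.length := by
        rw [hl', List.length_append, List.length_take, List.length_drop]
        have : (i : ℕ) < (j : ℕ) := hij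
        omega
      have hmem' : ∀ a ∈ l', a ∈ l := by
        intro a ha
        rcases List.mem_append.1 ha with h | h
        · exact (List.take_sublist _ l).subset h
        · exact (List.drop_sublist _ l).subset h
      have hend : sigmaL l' y = sigmaL l y := by
        rw [hl', sigmaL_append, heq, ← sigmaL_append, List.take_append_drop]
      have hsub : ∀ z ∈ pts l' y, z ∈ pts l y := by
        intro z hz
        obtain ⟨k, hk, rfl⟩ := mem_pts_iff.1 hz
        rw [hl', List.length_append, List.length_take, List.length_drop] at hk
        by_cases hki : k ≤ (i : ℕ)
        · have htk : l'.take k = l.take k := by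
            rw [hl', List.take_append, List.take_take,
              min_eq_left hki, List.length_take]
            have : k - min (i : ℕ) l.length = 0 := by omega
            rw [this, List.take_zero, List.append_nil]
          rw [htk]
          exact mem_pts_iff.2 ⟨k, by omega, rfl⟩
        · push_neg at hki
          have htk : l'.take k = l.take (i : ℕ) ++ (l.drop (j : ℕ)).take (k - (i : ℕ)) := by
            rw [hl', List.take_append, List.take_take,
              min_eq_right (by omega : (i:ℕ) ≤ k), List.length_take,
              min_eq_left (by omega : (i:ℕ) ≤ l.length)]
          have hk2 : sigmaL (l'.take k) y
              = sigmaL (l.take ((j : ℕ) + (k - (i : ℕ)))) y := by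
            rw [htk, sigmaL_append, heq, List.take_add, sigmaL_append]
          rw [hk2]
          refine mem_pts_iff.2 ⟨(j : ℕ) + (k - (i : ℕ)), by omega, rfl⟩
      obtain ⟨l'', h1, h2, h3, h4⟩ := ih l' y (by omega)
      exact ⟨l'', fun a ha => hmem' a (h1 a ha), by rw [h2, hend],
        fun z hz => hsub z (h3 z hz), h4⟩





/-- Strict descent to a local (hence global) minimum of the distance to `x` on an orbit. -/
lemma descent (hR : IsNRS R) (x y : V N) :
    ∀ (n : ℕ) (p : V N), p ∈ orb R y →
    ((orb_finite hR y).toFinset.filter (fun u => ‖x - u‖ < ‖x - p‖)).card ≤ n →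
    ∃ l : List (V N), (∀ a ∈ l, a ∈ R) ∧
      (∀ z ∈ pts l p, z ∈ orb R y ∧ ‖x - z‖ ≤ ‖x - p‖) ∧
      (∀ α ∈ R, 0 ≤ ⟪x, α⟫ * ⟪sigmaL l p, α⟫) := by
  intro n
  induction n with
  | zero =>
    intro p hp hcard
    by_cases hloc : ∀ α ∈ R, 0 ≤ ⟪x, α⟫ * ⟪p, α⟫
    · refine ⟨[], by simp, ?_, by simpa [sigmaL_nil] using hloc⟩
      intro z hz
      have : z = p := by simpa [pts] using hz
      subst this
      exact ⟨hp, le_refl _⟩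
    · exfalso
      push_neg at hloc
      obtain ⟨α, hα, hneg⟩ := hloc
      have hp' : sigma' α p ∈ orb R y := sigma'_mem_orb hR hα hp
      have hlt : ‖x - sigma' α p‖ < ‖x - p‖ := by
        have hsq := dist_sq_sigma' hR hα x p
        exact sq_lt_imp_lt (norm_nonneg _) (norm_nonneg _) (by nlinarith)
      have : sigma' α p ∈ (orb_finite hR y).toFinset.filter
          (fun u => ‖x - u‖ < ‖x - p‖) :=
        Finset.mem_filter.2 ⟨(Set.Finite.mem_toFinset _).2 hp', hlt⟩
      have := Finset.card_pos.2 ⟨_, this⟩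
      omega
  | succ n ih =>
    intro p hp hcard
    by_cases hloc : ∀ α ∈ R, 0 ≤ ⟪x, α⟫ * ⟪p, α⟫
    · refine ⟨[], by simp, ?_, by simpa [sigmaL_nil] using hloc⟩
      intro z hz
      have : z = p := by simpa [pts] using hz
      subst this
      exact ⟨hp, le_refl _⟩
    · push_neg at hloc
      obtain ⟨α, hα, hneg⟩ := hloc
      have hp' : sigma' α p ∈ orb R y := sigma'_mem_orb hR hα hp
      have hlt : ‖x - sigma' α p‖ < ‖x - p‖ := by
        have hsq := dist_sq_sigma' hR hα x p
        exact sq_lt_imp_lt (norm_nonneg _) (norm_nonneg _) (by nlinarith)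
      have hss : (orb_finite hR y).toFinset.filter (fun u => ‖x - u‖ < ‖x - sigma' α p‖) ⊂
          (orb_finite hR y).toFinset.filter (fun u => ‖x - u‖ < ‖x - p‖) := by
        refine Finset.ssubset_iff_of_subset ?_ |>.2 ?_
        · intro u hu
          rcases Finset.mem_filter.1 hu with ⟨h1, h2⟩
          exact Finset.mem_filter.2 ⟨h1, by linarith⟩
        · refine ⟨sigma' α p, Finset.mem_filter.2
            ⟨(Set.Finite.mem_toFinset _).2 hp', hlt⟩, fun hmem => ?_⟩
          have := (Finset.mem_filter.1 hmem).2
          linarith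
      have hcard' : ((orb_finite hR y).toFinset.filter
          (fun u => ‖x - u‖ < ‖x - sigma' α p‖)).card ≤ n := by
        have := Finset.card_lt_card hss
        omega
      obtain ⟨l, hlR, hlpts, hlend⟩ := ih (sigma' α p) hp' hcard'
      refine ⟨α :: l, ?_, ?_, ?_⟩
      · intro a ha
        rcases List.mem_cons.1 ha with h | h
        · exact h ▸ hα
        · exact hlR a h
      · intro z hz
        rcases List.mem_cons.1 (show z ∈ p :: pts l (sigma' α p) from hz) with h | h
        · subst h
          exact ⟨hp, le_refl _⟩
        · obtain ⟨h1, h2⟩ := hlpts z h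
          exact ⟨h1, by linarith⟩
      · intro β hβ
        exact hlend β hβ

/-- The chain points can be reached by reflection paths staying among chain points. -/
lemma chain_path (hR : IsNRS R) (m : ℕ) (σ : ℕ → V N → V N) (h0 : σ 0 = id)
    (hstep : ∀ j < m, ∃ g : V N → V N,
      (g = id ∨ ∃ α ∈ R, g = sigma' α) ∧ σ (j + 1) = g ∘ σ j) (y : V N) :
    ∀ j ≤ m, ∃ l : List (V N), (∀ a ∈ l, a ∈ R) ∧ sigmaL l y = σ j y ∧
      ∀ z ∈ pts l y, ∃ j' ≤ m, z = σ j' y := by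
  intro j
  induction j with
  | zero =>
    intro _
    refine ⟨[], by simp, by rw [h0]; rfl, ?_⟩
    intro z hz
    have : z = y := by simpa [pts] using hz
    exact ⟨0, Nat.zero_le _, by rw [this, h0]; rfl⟩
  | succ j ihj =>
    intro hj
    obtain ⟨l, hlR, hlend, hlpts⟩ := ihj (by omega)
    obtain ⟨g, hg, hgeq⟩ := hstep j (by omega)
    rcases hg with rfl | ⟨α, hα, rfl⟩
    · refine ⟨l, hlR, ?_, hlpts⟩
      rw [hgeq]
      show sigmaL l y = σ j y
      exact hlend
    · refine ⟨l ++ [α], ?_, ?_, ?_⟩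
      · intro a ha
        rcases List.mem_append.1 ha with h | h
        · exact hlR a h
        · rcases List.mem_singleton.1 h with rfl
          exact hα
      · rw [sigmaL_append, hlend, hgeq]
        rfl
      · intro z hz
        rw [pts_append] at hz
        rcases List.mem_append.1 hz with h | h
        · exact hlpts z ((List.dropLast_sublist _).subset h)
        · rw [hlend] at h
          rcases List.mem_cons.1 (show z ∈ σ j y :: pts [] (sigma' α (σ j y)) from h) with
            h' | h'
          · exact ⟨j, by omega, h'⟩
          · have : z = sigma' α (σ j y) := by simpa [pts] using h'
            refine ⟨j + 1, by omega, ?_⟩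
            rw [this, hgeq]
            rfl

/-- `rho` as a product of elementary factors over prefixes. -/
lemma rho_eq_prod (l : List (V N)) (x y : V N) (t : ℝ) :
    rho l x y t = ∏ i ∈ Finset.range l.length,
      ((1 + ‖x - sigmaL (l.take i) y‖ / Real.sqrt t) ^ 2)⁻¹ := by
  induction l generalizing y with
  | nil => simp [rho]
  | cons a l' ih =>
    show ((1 + ‖x - y‖ / Real.sqrt t) ^ 2)⁻¹ * rho l' x (sigma' a y) t = _
    rw [ih (sigma' a y), List.length_cons, Finset.prod_range_succ', mul_comm]
    rfl

lemma rho_nonneg (l : List (V N)) (x y : V N) (t : ℝ) : 0 ≤ rho l x y t := by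
  rw [rho_eq_prod]
  exact Finset.prod_nonneg fun i _ => by positivity

lemma factor_le_one {x z : V N} {t : ℝ} (ht : 0 < t) :
    ((1 + ‖x - z‖ / Real.sqrt t) ^ 2)⁻¹ ≤ 1 := by
  have h0 : 0 ≤ ‖x - z‖ / Real.sqrt t := by positivity
  have h2 : (1:ℝ) ≤ (1 + ‖x - z‖ / Real.sqrt t) ^ 2 := by nlinarith
  exact inv_le_one_of_one_le₀ h2

lemma factor_pos (x z : V N) (t : ℝ) : 0 < ((1 + ‖x - z‖ / Real.sqrt t) ^ 2)⁻¹ := by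
  have h0 : 0 ≤ ‖x - z‖ / Real.sqrt t := by positivity
  positivity

lemma factor_mono {x z z' : V N} {t : ℝ} (h : ‖x - z‖ ≤ ‖x - z'‖) :
    ((1 + ‖x - z'‖ / Real.sqrt t) ^ 2)⁻¹ ≤ ((1 + ‖x - z‖ / Real.sqrt t) ^ 2)⁻¹ := by
  have hs : 0 ≤ Real.sqrt t := Real.sqrt_nonneg t
  have h0 : 0 ≤ ‖x - z‖ / Real.sqrt t := by positivity
  have h0' : 0 ≤ ‖x - z'‖ / Real.sqrt t := by positivity
  have h2 : ‖x - z‖ / Real.sqrt t ≤ ‖x - z'‖ / Real.sqrt t := by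
    rcases eq_or_lt_of_le hs with h' | h'
    · rw [← h']
      simp
    · gcongr
  rw [inv_le_inv₀ (by positivity) (by positivity)]
  nlinarith




lemma lists_finite (K : ℕ) :
    Finite {l : List (V N) // (∀ a ∈ l, a ∈ R) ∧ l.length ≤ K ∧ IsAdmissible R l x y} := by
  classical
  have hfin : {l : List {a // a ∈ R} | l.length ≤ K}.Finite := List.finite_length_le _ K
  haveI : Finite ↥{l : List {a // a ∈ R} | l.length ≤ K} := hfin.to_subtype
  set Φ : {l : List (V N) // (∀ a ∈ l, a ∈ R) ∧ l.length ≤ K ∧ IsAdmissible R l x y} →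
      ↥{l : List {a // a ∈ R} | l.length ≤ K} :=
    fun l => ⟨l.1.pmap (fun a ha => (⟨a, ha⟩ : {a // a ∈ R})) l.2.1, by
      simp only [Set.mem_setOf_eq, List.length_pmap]
      exact l.2.2.1⟩ with hΦ
  refine Finite.of_injective Φ ?_
  intro l₁ l₂ h
  apply Subtype.ext
  have h' := congrArg (fun l => (l : List {a // a ∈ R}).map Subtype.val) (Subtype.ext_iff.1 h)
  simpa [hΦ, List.map_pmap, List.pmap_eq_map, -List.map_subtype] using h'

lemma rho_le_Lam (x y : V N) (t : ℝ) (l : List (V N))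
    (h : (∀ a ∈ l, a ∈ R) ∧ l.length ≤ Nat.card (Gset R) ∧ IsAdmissible R l x y) :
    rho l x y t ≤ Lam R x y t := by
  haveI := lists_finite (R := R) (x := x) (y := y) (Nat.card (Gset R))
  have hsumm : Summable (fun l' : {l' : List (V N) // (∀ a ∈ l', a ∈ R) ∧
      l'.length ≤ Nat.card (Gset R) ∧ IsAdmissible R l' x y} => rho (l' : List (V N)) x y t) :=
    Summable.of_finite
  exact hsumm.le_tsum ⟨l, h⟩ (fun j _ => rho_nonneg _ x y t)





lemma prod_subset_le {f : ℕ → ℝ} {s T : Finset ℕ} (h : s ⊆ T)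
    (h0 : ∀ i ∈ T, 0 ≤ f i) (h1 : ∀ i ∈ T, f i ≤ 1) :
    ∏ i ∈ T, f i ≤ ∏ i ∈ s, f i := by
  rw [← Finset.prod_sdiff h]
  have hle : ∏ i ∈ T \ s, f i ≤ 1 :=
    Finset.prod_le_one (fun i hi => h0 i (Finset.mem_sdiff.1 hi).1)
      (fun i hi => h1 i (Finset.mem_sdiff.1 hi).1)
  have hnn : 0 ≤ ∏ i ∈ s, f i := Finset.prod_nonneg (fun i hi => h0 i (h hi))
  exact mul_le_of_le_one_left hnn hle

/-- The key product estimate. -/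
lemma prod_bound (x y p : V N) (m K : ℕ) (σ : ℕ → V N → V N)
    (l : List (V N)) (hlen : l.length + 1 ≤ K)
    (hnd : (pts l y).Nodup)
    (hpts : ∀ z ∈ pts l y, (∃ j ≤ m, z = σ j y) ∨ ‖x - z‖ ≤ ‖x - p‖)
    (J : Finset ℕ) (hJsub : J ⊆ Finset.range (m + 1)) (hJcard : K < J.card)
    (hJp : ∀ j ∈ J, σ j y = p)
    (t : ℝ) (ht : 0 < t) :
    ∏ j ∈ Finset.range (m + 1), ((1 + ‖x - σ j y‖ / Real.sqrt t) ^ 2)⁻¹ ≤ rho l x y t := by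
  classical
  set F : V N → ℝ := fun z => ((1 + ‖x - z‖ / Real.sqrt t) ^ 2)⁻¹ with hF
  set q : ℕ → V N := fun i => sigmaL (l.take i) y with hq
  set n := l.length with hn
  have hqget : ∀ i, i < n + 1 → ∀ (h : i < (pts l y).length), (pts l y)[i] = q i := by
    intro i hi h
    exact pts_getElem l y i hi
  have hqinj : ∀ i₁, i₁ < n + 1 → ∀ i₂, i₂ < n + 1 → q i₁ = q i₂ → i₁ = i₂ := by
    intro i₁ h₁ i₂ h₂ heq
    have hl1 : i₁ < (pts l y).length := by rw [pts_length]; omega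
    have hl2 : i₂ < (pts l y).length := by rw [pts_length]; omega
    have : (pts l y)[i₁] = (pts l y)[i₂] := by
      rw [hqget i₁ h₁ hl1, hqget i₂ h₂ hl2, heq]
    exact (List.Nodup.getElem_inj_iff hnd).1 this
  have hqpts : ∀ i, i < n + 1 → q i ∈ pts l y := fun i hi =>
    mem_pts_iff.2 ⟨i, by omega, rfl⟩
  set Apos := (Finset.range n).filter (fun i => ∃ j ≤ m, q i = σ j y) with hApos
  set Bpos := Finset.range n \ Apos with hBpos
  have hBdist : ∀ i ∈ Bpos, ‖x - q i‖ ≤ ‖x - p‖ := by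
    intro i hi
    have hiR : i ∈ Finset.range n := (Finset.mem_sdiff.1 hi).1
    have hiA : i ∉ Apos := (Finset.mem_sdiff.1 hi).2
    have hin : i < n := Finset.mem_range.1 hiR
    rcases hpts (q i) (hqpts i (by omega)) with h | h
    · exact absurd (Finset.mem_filter.2 ⟨hiR, h⟩) hiA
    · exact h
  set occ : V N → ℕ := fun z =>
    if h : ∃ j, j ∈ Finset.range (m + 1) ∧ σ j y = z then h.choose else 0 with hoccdef
  have hocc : ∀ z : V N, (∃ j ≤ m, z = σ j y) →
      occ z ∈ Finset.range (m + 1) ∧ σ (occ z) y = z := by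
    intro z hz
    obtain ⟨j, hj, rfl⟩ := hz
    have hex : ∃ j', j' ∈ Finset.range (m + 1) ∧ σ j' y = σ j y :=
      ⟨j, Finset.mem_range.2 (by omega), rfl⟩
    rw [hoccdef]
    simp only [dif_pos hex]
    exact ⟨hex.choose_spec.1, hex.choose_spec.2⟩
  have hAchain : ∀ i ∈ Apos, occ (q i) ∈ Finset.range (m + 1) ∧ σ (occ (q i)) y = q i := by
    intro i hi
    have := (Finset.mem_filter.1 hi).2
    obtain ⟨j, hj, heq⟩ := this
    exact hocc (q i) ⟨j, hj, heq⟩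
  set TA := Apos.image (fun i => occ (q i)) with hTA
  have hinjA : ∀ i₁ ∈ Apos, ∀ i₂ ∈ Apos, occ (q i₁) = occ (q i₂) → i₁ = i₂ := by
    intro i₁ h₁ i₂ h₂ heq
    have e₁ := (hAchain i₁ h₁).2
    have e₂ := (hAchain i₂ h₂).2
    have hq12 : q i₁ = q i₂ := by rw [← e₁, ← e₂, heq]
    have hi1 : i₁ < n := Finset.mem_range.1 (Finset.mem_filter.1 h₁).1
    have hi2 : i₂ < n := Finset.mem_range.1 (Finset.mem_filter.1 h₂).1
    exact hqinj i₁ (by omega) i₂ (by omega) hq12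
  have hTAsub : TA ⊆ Finset.range (m + 1) := by
    intro j hj
    obtain ⟨i, hi, rfl⟩ := Finset.mem_image.1 hj
    exact (hAchain i hi).1
  have hJTA : (J ∩ TA).card ≤ 1 := by
    have hsub : J ∩ TA ⊆ {occ p} := by
      intro j hj
      obtain ⟨hjJ, hjTA⟩ := Finset.mem_inter.1 hj
      obtain ⟨i, hi, rfl⟩ := Finset.mem_image.1 hjTA
      have h1 := (hAchain i hi).2
      have h2 := hJp _ hjJ
      have : q i = p := by rw [← h1, h2]
      rw [Finset.mem_singleton, this]
    exact le_trans (Finset.card_le_card hsub) (by simp)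
  have hJsdiff : K ≤ (J \ TA).card := by
    have := Finset.card_sdiff_add_card_inter J TA
    omega
  set r := Bpos.card with hr
  have hrle : r ≤ n := by
    rw [hr, hBpos]
    exact le_trans (Finset.card_le_card (Finset.sdiff_subset)) (by simp)
  obtain ⟨Tp, hTpsub, hTpcard⟩ := Finset.exists_subset_card_eq (s := J \ TA) (n := r) (by omega)
  have hdisj : Disjoint TA Tp := by
    rw [Finset.disjoint_left]
    intro a ha haT
    exact (Finset.mem_sdiff.1 (hTpsub haT)).2 ha
  have hTsub : TA ∪ Tp ⊆ Finset.range (m + 1) := by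
    intro a ha
    rcases Finset.mem_union.1 ha with h | h
    · exact hTAsub h
    · exact hJsub (Finset.mem_sdiff.1 (hTpsub h)).1
  have hFnn : ∀ z : V N, 0 ≤ F z := fun z => le_of_lt (factor_pos x z t)
  have step1 : ∏ j ∈ Finset.range (m + 1), F (σ j y) ≤ ∏ j ∈ TA ∪ Tp, F (σ j y) :=
    prod_subset_le hTsub (fun i _ => hFnn _) (fun i _ => factor_le_one ht)
  have step2 : ∏ j ∈ TA ∪ Tp, F (σ j y) =
      (∏ j ∈ TA, F (σ j y)) * ∏ j ∈ Tp, F (σ j y) := Finset.prod_union hdisj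
  have step3 : ∏ j ∈ TA, F (σ j y) = ∏ i ∈ Apos, F (q i) := by
    rw [hTA, Finset.prod_image hinjA]
    exact Finset.prod_congr rfl fun i hi => by rw [(hAchain i hi).2]
  have step4 : ∏ j ∈ Tp, F (σ j y) = F p ^ r := by
    have hcongr : ∏ j ∈ Tp, F (σ j y) = ∏ j ∈ Tp, F p :=
      Finset.prod_congr rfl fun j hj => by rw [hJp j (Finset.mem_sdiff.1 (hTpsub hj)).1]
    rw [hcongr, Finset.prod_const, hTpcard]
  have step5 : F p ^ r ≤ ∏ i ∈ Bpos, F (q i) := by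
    rw [← Finset.prod_const]
    exact Finset.prod_le_prod (fun i _ => hFnn p) (fun i hi => factor_mono (hBdist i hi))
  have step6 : (∏ i ∈ Apos, F (q i)) * ∏ i ∈ Bpos, F (q i) = ∏ i ∈ Finset.range n, F (q i) := by
    rw [hBpos, mul_comm]
    exact Finset.prod_sdiff (Finset.filter_subset _ _)
  have hrho : rho l x y t = ∏ i ∈ Finset.range n, F (q i) := rho_eq_prod l x y t
  have hAnn : 0 ≤ ∏ i ∈ Apos, F (q i) := Finset.prod_nonneg fun i _ => hFnn _
  calc ∏ j ∈ Finset.range (m + 1), F (σ j y) ≤ ∏ j ∈ TA ∪ Tp, F (σ j y) := step1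
  _ = (∏ j ∈ TA, F (σ j y)) * ∏ j ∈ Tp, F (σ j y) := step2
  _ = (∏ i ∈ Apos, F (q i)) * F p ^ r := by rw [step3, step4]
  _ ≤ (∏ i ∈ Apos, F (q i)) * ∏ i ∈ Bpos, F (q i) := by
      exact mul_le_mul_of_nonneg_left step5 hAnn
  _ = ∏ i ∈ Finset.range n, F (q i) := step6
  _ = rho l x y t := hrho.symm




theorem statement12' (N : ℕ) (R : Finset (V N)) (hR : IsNRS R)
    (m : ℕ) (hm : Nat.card (Gset R) ^ 2 + 1 ≤ m)
    (σ : ℕ → V N → V N) (h0 : σ 0 = id)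
    (hstep : ∀ j < m, ∃ g : V N → V N,
      (g = id ∨ ∃ α ∈ R, g = sigma' α) ∧ σ (j + 1) = g ∘ σ j)
    (x y : V N) :
    ∃ l : List (V N), (∀ a ∈ l, a ∈ R) ∧ l.length ≤ Nat.card (Gset R) ∧
      IsAdmissible R l x y ∧
      ∀ t : ℝ, 0 < t →
        (∏ j ∈ Finset.range (m + 1), ((1 + ‖x - σ j y‖ / Real.sqrt t) ^ 2)⁻¹) ≤
            rho l x y t ∧
          rho l x y t ≤ Lam R x y t := by
  classical
  set K := Nat.card (Gset R) with hK
  have hK1 : 1 ≤ K := K_pos hR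
  have hchain_orb : ∀ j ≤ m, σ j y ∈ orb R y := by
    intro j
    induction j with
    | zero =>
      intro _
      rw [h0]
      exact mem_orb_self y
    | succ j ih =>
      intro hj
      obtain ⟨g, hg, hgeq⟩ := hstep j (by omega)
      rcases hg with rfl | ⟨α, hα, rfl⟩
      · rw [hgeq]
        exact ih (by omega)
      · rw [hgeq]
        exact sigma'_mem_orb hR hα (ih (by omega))
  set O := (orb_finite hR y).toFinset with hO
  have hOmem : ∀ u : V N, u ∈ O ↔ u ∈ orb R y := fun u => Set.Finite.mem_toFinset _
  have hOcard : O.card ≤ K := by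
    have h1 := orb_card_le hR y
    have h2 : (orb R y).ncard = O.card := Set.ncard_eq_toFinset_card _ (orb_finite hR y)
    omega
  have hmaps : ∀ j ∈ Finset.range (m + 1), σ j y ∈ O := by
    intro j hj
    exact (hOmem _).2 (hchain_orb j (by have := Finset.mem_range.1 hj; omega))
  have hcc : O.card * K < (Finset.range (m + 1)).card := by
    rw [Finset.card_range]
    have h1 : O.card * K ≤ K * K := Nat.mul_le_mul_right _ hOcard
    have h2 : K ^ 2 = K * K := sq K
    omega
  obtain ⟨p, hpO, hpJ⟩ := Finset.exists_lt_card_fiber_of_mul_lt_card_of_maps_to hmaps hcc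
  set J := (Finset.range (m + 1)).filter (fun j => σ j y = p) with hJ
  have hJsub : J ⊆ Finset.range (m + 1) := Finset.filter_subset _ _
  have hJp : ∀ j ∈ J, σ j y = p := fun j hj => (Finset.mem_filter.1 hj).2
  have hJne : J.Nonempty := Finset.card_pos.1 (by omega)
  obtain ⟨jp, hjp⟩ := hJne
  have hjpm : jp ≤ m := by
    have := Finset.mem_range.1 (Finset.mem_filter.1 hjp).1
    omega
  have hpchain : σ jp y = p := (Finset.mem_filter.1 hjp).2
  have hporb : p ∈ orb R y := by
    rw [← hpchain]
    exact hchain_orb jp hjpm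
  obtain ⟨lA, hAR, hAend, hApts⟩ := chain_path hR m σ h0 hstep y jp hjpm
  have hAp : sigmaL lA y = p := hAend.trans hpchain
  obtain ⟨lB, hBR, hBpts, hBloc⟩ := descent hR x y
    (((orb_finite hR y).toFinset.filter (fun u => ‖x - u‖ < ‖x - p‖)).card) p hporb (le_refl _)
  set lfull := lA ++ lB with hlfull
  have hfullR : ∀ a ∈ lfull, a ∈ R := by
    intro a ha
    rcases List.mem_append.1 ha with h | h
    exacts [hAR a h, hBR a h]
  have hfullend : sigmaL lfull y = sigmaL lB p := by
    rw [hlfull, sigmaL_append, hAp]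
  have hfullpts : ∀ z ∈ pts lfull y,
      ((∃ j ≤ m, z = σ j y) ∨ ‖x - z‖ ≤ ‖x - p‖) ∧ z ∈ orb R y := by
    intro z hz
    rw [hlfull, pts_append, hAp] at hz
    rcases List.mem_append.1 hz with h | h
    · obtain ⟨j', hj', hzj⟩ := hApts z ((List.dropLast_sublist _).subset h)
      refine ⟨Or.inl ⟨j', hj', hzj⟩, ?_⟩
      rw [hzj]
      exact hchain_orb j' hj'
    · obtain ⟨h1, h2⟩ := hBpts z h
      exact ⟨Or.inr h2, h1⟩
  obtain ⟨l, hlsub, hlend, hlpts, hlnd⟩ := loop_erase lfull.length lfull y (le_refl _)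
  have hlR : ∀ a ∈ l, a ∈ R := fun a ha => hfullR a (hlsub a ha)
  have hlend' : sigmaL l y = sigmaL lB p := by rw [hlend, hfullend]
  have hlen : l.length + 1 ≤ K := by
    have h1 : (pts l y).toFinset.card = (pts l y).length := List.toFinset_card_of_nodup hlnd
    have h2 : (pts l y).toFinset ⊆ O := by
      intro a ha
      rw [List.mem_toFinset] at ha
      exact (hOmem _).2 ((hfullpts a (hlpts a ha)).2)
    have h3 := Finset.card_le_card h2
    rw [h1, pts_length] at h3
    omega
  have hadm : IsAdmissible R l x y := by
    show dG R x (sigmaL l y) = ‖x - sigmaL l y‖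
    rw [hlend']
    exact dG_eq hR hBloc
  refine ⟨l, hlR, by omega, hadm, ?_⟩
  intro t ht
  constructor
  · exact prod_bound x y p m K σ l hlen hlnd
      (fun z hz => (hfullpts z (hlpts z hz)).1) J hJsub hpJ hJp t ht
  · exact rho_le_Lam x y t l ⟨hlR, by omega, hadm⟩


/-- products along any chain of reflections of length `≥ |G|²+1`
are dominated by `ρ_𝛂` for some admissible sequence `𝛂` of length `≤ |G|`. -/
theorem statement12 (N : ℕ) (R : Finset (V N)) (hR : IsNRS R)
    (m : ℕ) (hm : Nat.card (Gset R) ^ 2 + 1 ≤ m)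
    (σ : ℕ → V N → V N) (h0 : σ 0 = id)
    (hstep : ∀ j < m, ∃ g : V N → V N,
      (g = id ∨ ∃ α ∈ R, g = sigma' α) ∧ σ (j + 1) = g ∘ σ j)
    (x y : V N) :
    ∃ l : List (V N), (∀ a ∈ l, a ∈ R) ∧ l.length ≤ Nat.card (Gset R) ∧
      IsAdmissible R l x y ∧
      ∀ t : ℝ, 0 < t →
        (∏ j ∈ Finset.range (m + 1), ((1 + ‖x - σ j y‖ / Real.sqrt t) ^ 2)⁻¹) ≤
            rho l x y t ∧
          rho l x y t ≤ Lam R x y t := by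
  exact statement12' N R hR m hm σ h0 hstep x y
end
end
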